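/- arXiv:1208.2257 — 5 statements merged into one kernel-verified Lean document; each statement's English description precedes it below -/
import Mathlib

section
/- Let F be a number field of degree d = [F:ℚ], let V be a finite-dimensional F-vector space, let Λ ⊆ V be an 𝒪_F-lattice in V (a finitely generated 𝒪_F-submodule that spans V over F), and let D be a compact subset of V_∞ = V ⊗_ℚ ℝ. Then there exists a constant c > 0 (depending only on D and Λ) such that for every real number a > 0 and every nonzero integral ideal 𝔫 of 𝒪_F: if the set a·D ∩ ((𝔫Λ) ∖ {0}) (intersection inside V_∞, with V embedded via x ↦ x ⊗ 1) is nonempty, then N(𝔫) ≤ c · a^d. -/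
/-!
Scaling the coordinate functionals of an `F`-basis by a common denominator gives finitely many
`F`-linear forms `φᵢ : V → F` that take integral values on `Λ`, hence values in `𝔫` on `𝔫Λ`, and
that do not all vanish at any `x ≠ 0`. For `x ∈ 𝔫Λ ∖ {0}` pick `i` with `t = φᵢ x ≠ 0`; then
`N(𝔫) ∣ N(t)`. Each `σ ∘ φᵢ` (`σ : F → ℂ`) extends to a continuous `ℝ`-linear map on `V_∞`, so is
bounded by `C a` on `a • D`, whence `N(𝔫) ≤ |N(t)| = ∏_σ |σ t| ≤ (C a)^d`.
-/

open scoped TensorProduct Pointwise nonZeroDivisors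
open NumberField

/-- The scalar action of `ℝ` on `V ⊗[ℚ] ℝ` through the right tensor factor. -/
noncomputable instance tensorRealSMul (V : Type*) [AddCommGroup V] [Module ℚ V] :
    SMul ℝ (V ⊗[ℚ] ℝ) :=
  ⟨fun a x => (TensorProduct.comm ℚ V ℝ).symm (a • TensorProduct.comm ℚ V ℝ x)⟩

/-- The `ℝ`-module structure on `V ⊗[ℚ] ℝ` through the right tensor factor. -/
noncomputable instance tensorRealModule (V : Type*) [AddCommGroup V] [Module ℚ V] :
    Module ℝ (V ⊗[ℚ] ℝ) :=
  Function.Injective.module ℝ (TensorProduct.comm ℚ V ℝ).toLinearMap.toAddMonoidHom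
    (TensorProduct.comm ℚ V ℝ).injective
    (fun _ _ => (TensorProduct.comm ℚ V ℝ).apply_symm_apply _)

/-- The canonical topology on the finite-dimensional real vector space `V ⊗[ℚ] ℝ`
(the unique topology making it a topological `ℝ`-vector space). -/
noncomputable instance tensorRealTopology (V : Type*) [AddCommGroup V] [Module ℚ V] :
    TopologicalSpace (V ⊗[ℚ] ℝ) := moduleTopology ℝ (V ⊗[ℚ] ℝ)

section TensorReal

variable (V : Type*) [AddCommGroup V] [Module ℚ V]

instance : IsModuleTopology ℝ (V ⊗[ℚ] ℝ) := ⟨rfl⟩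

noncomputable def tensorRealCommEquiv : V ⊗[ℚ] ℝ ≃ₗ[ℝ] ℝ ⊗[ℚ] V where
  __ := TensorProduct.comm ℚ V ℝ
  map_smul' _ _ := (TensorProduct.comm ℚ V ℝ).apply_symm_apply _

variable {V}

section

variable {E : Type*} [AddCommGroup E] [Module ℚ E] [Module ℝ E] [IsScalarTower ℚ ℝ E]

noncomputable def LinearMap.extendTensorReal (g : V →ₗ[ℚ] E) : V ⊗[ℚ] ℝ →ₗ[ℝ] E :=
  g.liftBaseChange ℝ ∘ₗ (tensorRealCommEquiv V).toLinearMap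

@[simp]
theorem LinearMap.extendTensorReal_tmul_one (g : V →ₗ[ℚ] E) (v : V) :
    g.extendTensorReal (v ⊗ₜ 1) = g v := by
  simp [extendTensorReal, tensorRealCommEquiv]

end

theorem IsCompact.exists_norm_le_mul_of_tmul_mem_smul {E : Type*} [NormedAddCommGroup E]
    [NormedSpace ℝ E] [Module ℚ E] [IsScalarTower ℚ ℝ E] {D : Set (V ⊗[ℚ] ℝ)}
    (hD : IsCompact D) (g : V →ₗ[ℚ] E) :
    ∃ C, 0 < C ∧ ∀ a : ℝ, 0 ≤ a → ∀ x : V, x ⊗ₜ 1 ∈ a • D → ‖g x‖ ≤ C * a := by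
  obtain ⟨C, hC⟩ := hD.exists_bound_of_continuousOn
    (IsModuleTopology.continuous_of_linearMap g.extendTensorReal).continuousOn
  refine ⟨max C 1, by positivity, fun a ha x hx => ?_⟩
  obtain ⟨y, hyD, hy⟩ := Set.mem_smul_set.mp hx
  calc ‖g x‖ = a * ‖g.extendTensorReal y‖ := by
        rw [← g.extendTensorReal_tmul_one, ← hy, map_smul, norm_smul, Real.norm_of_nonneg ha]
    _ ≤ max C 1 * a := by nlinarith [hC y hyD, le_max_left C 1]

end TensorReal

section IntegralFunctionals

variable {R : Type*} [CommRing R]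

theorem LinearMap.apply_mem_algebraMap_image_of_mem_smul {A M : Type*} [CommRing A] [Algebra R A]
    [AddCommGroup M] [Module R M] {Λ : Submodule R M} (f : M →ₗ[R] A)
    (hf : ∀ x ∈ Λ, f x ∈ Set.range (algebraMap R A)) {I : Ideal R} {x : M} (hx : x ∈ I • Λ) :
    f x ∈ algebraMap R A '' I := by
  induction hx using Submodule.smul_induction_on' with
  | smul r hr v hv =>
    obtain ⟨t, ht⟩ := hf v hv
    exact ⟨r * t, I.mul_mem_right t hr, by rw [map_smul, ← ht, Algebra.smul_def, map_mul]⟩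
  | add y _ z _ hy hz =>
    obtain ⟨s, hs, hsy⟩ := hy
    obtain ⟨t, ht, htz⟩ := hz
    exact ⟨s + t, I.add_mem hs ht, by rw [map_add, map_add, hsy, htz]⟩

variable {K V : Type*} [Field K] [Algebra R K] [IsFractionRing R K] [AddCommGroup V] [Module K V]
  [Module R V] [IsScalarTower R K V]

theorem Submodule.FG.exists_separating_functionals_integral [Nontrivial R]
    [FiniteDimensional K V] {Λ : Submodule R V} (hΛ : Λ.FG) :
    ∃ (n : ℕ) (φ : Fin n → V →ₗ[K] K), (∀ i, ∀ x ∈ Λ, φ i x ∈ Set.range (algebraMap R K)) ∧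
      ∀ x ≠ 0, ∃ i, φ i x ≠ 0 := by
  classical
  obtain ⟨s, rfl⟩ := hΛ
  let b := Module.finBasis K V
  obtain ⟨m, hm⟩ := IsLocalization.exist_integer_multiples R⁰ (Finset.univ ×ˢ s)
    fun p => b.coord p.1 p.2
  refine ⟨_, fun i => algebraMap R K m • b.coord i, fun i x hx => ?_, fun x hx => ?_⟩
  · induction hx using Submodule.span_induction with
    | mem v hv =>
      obtain ⟨t, ht⟩ := hm (i, v) (Finset.mem_product.mpr ⟨Finset.mem_univ _, hv⟩)
      exact ⟨t, by simpa [Submonoid.smul_def, Algebra.smul_def] using ht⟩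
    | zero => exact ⟨0, by simp⟩
    | add x y _ _ hx hy =>
      obtain ⟨s, hs⟩ := hx
      obtain ⟨t, ht⟩ := hy
      exact ⟨s + t, by rw [map_add, map_add, hs, ht]⟩
    | smul r x _ hx =>
      obtain ⟨t, ht⟩ := hx
      exact ⟨r * t, by rw [← algebraMap_smul K r x, map_smul, smul_eq_mul, ← ht, ← map_mul]⟩
  · obtain ⟨i, hi⟩ := Finsupp.ne_iff.mp ((LinearEquiv.map_ne_zero_iff b.repr).mpr hx)
    exact ⟨i, mul_ne_zero (IsFractionRing.to_map_ne_zero_of_mem_nonZeroDivisors m.2)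
      (by simpa using hi)⟩

end IntegralFunctionals

section NumberField

variable {F : Type*} [Field F] [NumberField F]

theorem abs_norm_le_pow_of_forall_norm_embedding_le {x : F} {B : ℝ}
    (hB : ∀ σ : F →ₐ[ℚ] ℂ, ‖σ x‖ ≤ B) :
    |(Algebra.norm ℚ x : ℝ)| ≤ B ^ Module.finrank ℚ F := by
  calc |(Algebra.norm ℚ x : ℝ)| = ∏ σ : F →ₐ[ℚ] ℂ, ‖σ x‖ := by
        rw [← norm_prod, ← Algebra.norm_eq_prod_embeddings, eq_ratCast, Complex.norm_ratCast]
    _ ≤ ∏ _σ : F →ₐ[ℚ] ℂ, B := Finset.prod_le_prod (fun _ _ => norm_nonneg _) fun σ _ => hB σ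
    _ = B ^ Module.finrank ℚ F := by rw [Finset.prod_const, Finset.card_univ, AlgHom.card]

theorem Ideal.absNorm_le_pow_of_mem {I : Ideal (𝓞 F)} {t : 𝓞 F} (ht : t ∈ I) (ht0 : t ≠ 0)
    {B : ℝ} (hB : ∀ σ : F →ₐ[ℚ] ℂ, ‖σ t‖ ≤ B) :
    (Ideal.absNorm I : ℝ) ≤ B ^ Module.finrank ℚ F := by
  have hdvd := Ideal.absNorm_dvd_norm_of_mem ht
  have hnorm : Algebra.norm ℤ t ≠ 0 := Algebra.norm_ne_zero_iff.mpr ht0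
  calc (Ideal.absNorm I : ℝ) ≤ |(Algebra.norm ℤ t : ℝ)| := by
        rw [← Int.cast_abs, ← Int.cast_natCast]
        exact_mod_cast Int.le_of_dvd (abs_pos.mpr hnorm) ((dvd_abs _ _).mpr hdvd)
    _ = |(Algebra.norm ℚ (t : F) : ℝ)| := by rw [← Algebra.coe_norm_int]; push_cast; rfl
    _ ≤ B ^ Module.finrank ℚ F := abs_norm_le_pow_of_forall_norm_embedding_le hB

end NumberField

theorem stmt_1_general (F : Type*) [Field F] [NumberField F]
    (V : Type*) [AddCommGroup V] [Module F V] [FiniteDimensional F V]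
    [Module ℚ V] [IsScalarTower ℚ F V]
    [Module (𝓞 F) V] [IsScalarTower (𝓞 F) F V]
    (Λ : Submodule (𝓞 F) V) (hΛfg : Λ.FG)
    (D : Set (V ⊗[ℚ] ℝ)) (hD : IsCompact D) :
    ∃ c : ℝ, 0 < c ∧ ∀ a : ℝ, 0 < a → ∀ 𝔫 : Ideal (𝓞 F), 𝔫 ≠ 0 →
      (a • D ∩ ((fun x : V => x ⊗ₜ[ℚ] (1 : ℝ)) ''
        (((𝔫 • Λ : Submodule (𝓞 F) V) : Set V) \ {0}))).Nonempty →
      (Ideal.absNorm 𝔫 : ℝ) ≤ c * a ^ (Module.finrank ℚ F) := by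
  obtain ⟨n, φ, hφΛ, hφsep⟩ := hΛfg.exists_separating_functionals_integral (K := F)
  let g : V →ₗ[ℚ] (Fin n × (F →ₐ[ℚ] ℂ) → ℂ) :=
    LinearMap.pi fun p => p.2.toLinearMap ∘ₗ (φ p.1).restrictScalars ℚ
  obtain ⟨C, hC, hCg⟩ := hD.exists_norm_le_mul_of_tmul_mem_smul g
  refine ⟨C ^ Module.finrank ℚ F, by positivity, ?_⟩
  rintro a ha 𝔫 - ⟨_, hxD, x, ⟨hx𝔫, hx0⟩, rfl⟩
  obtain ⟨i, hi⟩ := hφsep x hx0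
  obtain ⟨t, ht𝔫, hti⟩ :=
    ((φ i).restrictScalars (𝓞 F)).apply_mem_algebraMap_image_of_mem_smul (hφΛ i) hx𝔫
  have ht0 : t ≠ 0 := by rintro rfl; exact hi (by simpa using hti.symm)
  have hσ (σ : F →ₐ[ℚ] ℂ) : ‖σ t‖ ≤ C * a := by
    have hgx : σ t = g x (i, σ) := by simp [g, hti]
    exact hgx ▸ (norm_le_pi_norm (g x) (i, σ)).trans (hCg a ha.le x hxD)
  rw [← mul_pow]
  exact Ideal.absNorm_le_pow_of_mem ht𝔫 ht0 hσ

/-- Let `F` be a number field of degree `d = [F:ℚ]`, `V` a finite-dimensional `F`-vector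
space, `Λ ⊆ V` an `𝒪_F`-lattice (a finitely generated `𝒪_F`-submodule spanning `V` over
`F`), and `D` a compact subset of `V_∞ = V ⊗_ℚ ℝ`. Then there is `c > 0` (depending only
on `D` and `Λ`) such that for every real `a > 0` and every nonzero integral ideal `𝔫`:
if `a•D ∩ ((𝔫Λ) ∖ {0})` is nonempty (inside `V_∞`, `V` embedded via `x ↦ x ⊗ 1`),
then `N(𝔫) ≤ c · a ^ d`. -/
theorem stmt_1 (F : Type*) [Field F] [NumberField F]
    (V : Type*) [AddCommGroup V] [Module F V] [FiniteDimensional F V]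
    [Module ℚ V] [IsScalarTower ℚ F V]
    [Module (𝓞 F) V] [IsScalarTower (𝓞 F) F V]
    (Λ : Submodule (𝓞 F) V) (hΛfg : Λ.FG) (hΛspan : Submodule.span F (Λ : Set V) = ⊤)
    (D : Set (V ⊗[ℚ] ℝ)) (hD : IsCompact D) :
    ∃ c : ℝ, 0 < c ∧ ∀ a : ℝ, 0 < a → ∀ 𝔫 : Ideal (𝓞 F), 𝔫 ≠ 0 →
      (a • D ∩ ((fun x : V => x ⊗ₜ[ℚ] (1 : ℝ)) ''
        (((𝔫 • Λ : Submodule (𝓞 F) V) : Set V) \ {0}))).Nonempty →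
      (Ideal.absNorm 𝔫 : ℝ) ≤ c * a ^ (Module.finrank ℚ F) :=
  stmt_1_general F V Λ hΛfg D hD
end

section
/- Let F be a number field of degree d = [F:ℚ], let V be a finite-dimensional F-vector space, let Λ ⊆ V be an 𝒪_F-lattice in V, and let D be a compact subset of V_∞ = V ⊗_ℚ ℝ. Then there exists a constant C > 0 (depending only on D and Λ) such that for every real number a > 0 and every nonzero integral ideal 𝔫 of 𝒪_F, the set a·D ∩ ((𝔫Λ) ∖ {0}) (intersection inside V_∞, with V embedded via x ↦ x ⊗ 1) is finite and has at most C · (a^d / N(𝔫))^{dim_F V} elements. -/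
open scoped TensorProduct Pointwise nonZeroDivisors
open NumberField

/-!
Choose the `ℚ`-basis of `V` built from an `F`-basis of `V` and a `ℚ`-basis of `F`. Its
coordinates extend to `ℝ`-linear functionals on `V ⊗[ℚ] ℝ`, bounded by some `R` on the compact
set `D`, hence by `a * R` on `a • D`. After clearing denominators by a fixed nonzero `β ∈ 𝒪_F`,
a nonzero `u ∈ 𝔫Λ` has an `F`-coordinate `c ≠ 0` with `β * c ∈ 𝔫`, so
`N(𝔫) ≤ |N(β * c)| ≤ K * max_k |c_k| ^ d`: some rational coordinate of `u` has absolute value at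
least `δ = (N(𝔫) / K) ^ (1 / d)`. The points of `a • D ∩ (𝔫Λ \ {0})` are therefore
`δ`-separated from each other and from `0` in the sup norm of the coordinates, and counting
cubes of side `δ` bounds their number by `(5 * a * R / δ) ^ (d * n) = C * (a ^ d / N(𝔫)) ^ n`.
-/

instance tensorRealIsModuleTopology (V : Type*) [AddCommGroup V] [Module ℚ V] :
    IsModuleTopology ℝ (V ⊗[ℚ] ℝ) := ⟨rfl⟩

section TensorReal

variable {V : Type*} [AddCommGroup V] [Module ℚ V]

lemma tensorReal_smul_tmul (a : ℝ) (v : V) (t : ℝ) : a • (v ⊗ₜ[ℚ] t) = v ⊗ₜ[ℚ] (a * t) := by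
  change (TensorProduct.comm ℚ V ℝ).symm (a • TensorProduct.comm ℚ V ℝ (v ⊗ₜ t)) = _
  rw [TensorProduct.comm_tmul, TensorProduct.smul_tmul', smul_eq_mul,
    TensorProduct.comm_symm_tmul]

noncomputable def tensorRealLift (f : V →ₗ[ℚ] ℝ) : (V ⊗[ℚ] ℝ) →ₗ[ℝ] ℝ where
  toFun := TensorProduct.lift (LinearMap.mul ℚ ℝ ∘ₗ f)
  map_add' := map_add _
  map_smul' a x := by
    induction x using TensorProduct.induction_on with
    | zero => simp
    | tmul v t => simp [tensorReal_smul_tmul, mul_left_comm]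
    | add x y hx hy => simp_all [smul_add, mul_add]

@[simp]
lemma tensorRealLift_tmul (f : V →ₗ[ℚ] ℝ) (v : V) (t : ℝ) :
    tensorRealLift f (v ⊗ₜ[ℚ] t) = f v * t := rfl

noncomputable def Module.Basis.tensorRealRepr {ι : Type*} (B : Module.Basis ι ℚ V) :
    (V ⊗[ℚ] ℝ) →ₗ[ℝ] ι → ℝ :=
  LinearMap.pi fun i => tensorRealLift (Algebra.linearMap ℚ ℝ ∘ₗ B.coord i)

@[simp]
lemma Module.Basis.tensorRealRepr_tmul_one {ι : Type*} (B : Module.Basis ι ℚ V) (u : V) :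
    B.tensorRealRepr (u ⊗ₜ 1) = fun i => (B.repr u i : ℝ) := by
  ext i
  simp [tensorRealRepr]

end TensorReal

lemma finite_and_ncard_le_of_separated {X ι : Type*} [Fintype ι] (S : Set X) (G : X → ι → ℝ)
    {δ ρ : ℝ} (hδ : 0 < δ) (hρ : 0 ≤ ρ) (hbound : ∀ x ∈ S, ‖G x‖ ≤ ρ)
    (hsep₀ : ∀ x ∈ S, δ ≤ ‖G x‖) (hsep : ∀ x ∈ S, ∀ y ∈ S, x ≠ y → δ ≤ ‖G x - G y‖) :
    S.Finite ∧ (S.ncard : ℝ) ≤ (5 * ρ / δ) ^ Fintype.card ι := by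
  classical
  rcases S.eq_empty_or_nonempty with rfl | ⟨x₀, hx₀⟩
  · simp only [Set.finite_empty, Set.ncard_empty, Nat.cast_zero, true_and]
    positivity
  have hδρ : 1 ≤ ρ / δ := (one_le_div hδ).mpr ((hsep₀ x₀ hx₀).trans (hbound x₀ hx₀))
  -- Distinct points of `S` lie in distinct cubes `∏ᵢ [kᵢ δ, (kᵢ + 1) δ)`.
  set B := ⌈ρ / δ⌉
  let Φ : X → ι → ℤ := fun x i => ⌊G x i / δ⌋
  have hmaps : Set.MapsTo Φ S ↑(Fintype.piFinset fun _ : ι => Finset.Icc (-B) B) := by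
    intro x hx
    simp only [Fintype.coe_piFinset, Set.mem_pi, Set.mem_univ,
      Finset.coe_Icc, Set.mem_Icc, forall_const]
    intro i
    have hi : |G x i / δ| ≤ ρ / δ := by
      rw [abs_div, abs_of_pos hδ]
      exact div_le_div_of_nonneg_right ((norm_le_pi_norm (G x) i).trans (hbound x hx)) hδ.le
    refine ⟨?_, Int.floor_le_floor (le_of_abs_le hi) |>.trans (Int.floor_le_ceil _)⟩
    rw [← Int.floor_neg]
    exact Int.floor_le_floor (neg_le_of_abs_le hi)
  have hinj : Set.InjOn Φ S := by
    intro x hx y hy hxy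
    by_contra hxy'
    refine (hsep x hx y hy hxy').not_gt ((pi_norm_lt_iff hδ).mpr fun i => ?_)
    have := Int.abs_sub_lt_one_of_floor_eq_floor (congrFun hxy i)
    rwa [← sub_div, abs_div, abs_of_pos hδ, div_lt_one hδ] at this
  refine ⟨Set.Finite.of_injOn hmaps hinj (Finset.finite_toSet _), ?_⟩
  calc (S.ncard : ℝ) ≤ (Fintype.piFinset fun _ : ι => Finset.Icc (-B) B).card := by
        exact_mod_cast (Set.ncard_le_ncard_of_injOn Φ hmaps hinj (Finset.finite_toSet _)).trans
          (Set.ncard_coe_finset _).le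
    _ = (2 * B + 1 : ℤ) ^ Fintype.card ι := by
        rw [Fintype.card_piFinset, Finset.prod_const, Finset.card_univ, Int.card_Icc,
          show B + 1 - -B = 2 * B + 1 by ring, Nat.cast_pow]
        congr 1
        exact_mod_cast Int.toNat_of_nonneg (by positivity)
    _ ≤ (5 * ρ / δ) ^ Fintype.card ι := by
        have hB : (B : ℝ) < ρ / δ + 1 := Int.ceil_lt_add_one _
        push_cast
        gcongr
        rw [mul_div_assoc]
        linarith

lemma finite_and_ncard_smul_inter_tmul_le {S V ι : Type*} [Ring S] [AddCommGroup V] [Module ℚ V]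
    [Module S V] [Fintype ι] (G : (V ⊗[ℚ] ℝ) →ₗ[ℝ] ι → ℝ) (L : Submodule S V)
    (D : Set (V ⊗[ℚ] ℝ)) {a ρ δ : ℝ} (ha : 0 ≤ a) (hρ : 0 ≤ ρ) (hD : ∀ x ∈ D, ‖G x‖ ≤ ρ)
    (hδ : 0 < δ) (hL : ∀ u ∈ L, u ≠ 0 → δ ≤ ‖G (u ⊗ₜ 1)‖) :
    (a • D ∩ (fun u : V => u ⊗ₜ[ℚ] (1 : ℝ)) '' ((L : Set V) \ {0})).Finite ∧
      ((a • D ∩ (fun u : V => u ⊗ₜ[ℚ] (1 : ℝ)) '' ((L : Set V) \ {0})).ncard : ℝ) ≤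
        (5 * (a * ρ) / δ) ^ Fintype.card ι := by
  refine finite_and_ncard_le_of_separated _ G hδ (by positivity) ?_ ?_ ?_
  · rintro _ ⟨⟨y, hy, rfl⟩, -⟩
    rw [map_smul, norm_smul, Real.norm_of_nonneg ha]
    exact mul_le_mul_of_nonneg_left (hD y hy) ha
  · rintro _ ⟨-, u, ⟨hu, hu0⟩, rfl⟩
    exact hL u hu hu0
  · rintro _ ⟨-, u, ⟨hu, -⟩, rfl⟩ _ ⟨-, w, ⟨hw, -⟩, rfl⟩ huw
    rw [← map_sub, ← TensorProduct.sub_tmul]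
    exact hL _ (L.sub_mem hu hw) (sub_ne_zero.mpr fun h => huw (by rw [h]))

lemma Algebra.exists_abs_norm_le_mul_pow_abs_repr {K L ι : Type*} [CommRing K] [LinearOrder K]
    [IsStrictOrderedRing K] [Ring L] [Algebra K L] [Fintype ι] [Nonempty ι]
    (b : Module.Basis ι K L) :
    ∃ C : K, 0 < C ∧ ∀ x : L, ∃ i, |Algebra.norm K x| ≤ C * |b.repr x i| ^ Fintype.card ι := by
  classical
  let M : ι → Matrix ι ι K := fun j => Algebra.leftMulMatrix b (b j)
  obtain ⟨pq₀, hpq₀⟩ := Finite.exists_max fun pq : ι × ι => ∑ j, |M j pq.1 pq.2|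
  set A := 1 + ∑ j, |M j pq₀.1 pq₀.2|
  have hA : 0 < A := by positivity
  refine ⟨(Fintype.card ι).factorial * A ^ Fintype.card ι, by positivity, fun x => ?_⟩
  obtain ⟨i, hi⟩ := Finite.exists_max fun j => |b.repr x j|
  refine ⟨i, ?_⟩
  have hlin : Algebra.leftMulMatrix b x = ∑ j, b.repr x j • M j := by
    conv_lhs => rw [← b.sum_repr x]
    simp only [map_sum, map_smul, M]
  have hentry : ∀ p q, |Algebra.leftMulMatrix b x p q| ≤ A * |b.repr x i| := by
    intro p q
    rw [hlin, Matrix.sum_apply]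
    calc |∑ j, (b.repr x j • M j) p q| ≤ ∑ j, |b.repr x i| * |M j p q| := by
          refine (Finset.abs_sum_le_sum_abs _ _).trans (Finset.sum_le_sum fun j _ => ?_)
          rw [Matrix.smul_apply, smul_eq_mul, abs_mul]
          exact mul_le_mul_of_nonneg_right (hi j) (abs_nonneg _)
      _ ≤ A * |b.repr x i| := by
          rw [← Finset.mul_sum, mul_comm]
          gcongr
          exact (hpq₀ (p, q)).trans (le_add_of_nonneg_left zero_le_one)
  calc |Algebra.norm K x| ≤ (Fintype.card ι).factorial • (A * |b.repr x i|) ^ Fintype.card ι := by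
        rw [Algebra.norm_eq_matrix_det b]
        exact Matrix.det_le (abv := AbsoluteValue.abs) hentry
    _ = _ := by rw [nsmul_eq_mul, mul_pow, mul_assoc]

lemma Submodule.FG.exists_map_ideal_smul_le {R K M ι : Type*} [CommSemiring R] [CommSemiring K]
    [Algebra R K] [AddCommMonoid M] [Module R M] [Finite ι] (S : Submonoid R) [IsLocalization S K]
    {Λ : Submodule R M} (hΛ : Λ.FG) (φ : ι → M →ₗ[R] K) :
    ∃ b : S, ∀ (I : Ideal R) i,
      (I • Λ).map ((b : R) • φ i) ≤ Submodule.map (Algebra.linearMap R K) I := by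
  obtain ⟨s, rfl⟩ := hΛ
  obtain ⟨b, hb⟩ := IsLocalization.exist_integer_multiples_of_finite S
    fun p : ι × s => φ p.1 p.2
  refine ⟨b, fun I i => ?_⟩
  calc (I • span R s).map ((b : R) • φ i) = I • (span R s).map ((b : R) • φ i) :=
        map_smul'' ..
    _ ≤ I • (1 : Submodule R K) := by
        refine smul_mono_right _ ?_
        rw [map_span, span_le]
        rintro _ ⟨x, hx, rfl⟩
        exact mem_one.mpr (hb (i, ⟨x, hx⟩))
    _ = Submodule.map (Algebra.linearMap R K) I := by
        rw [one_eq_range, LinearMap.range_eq_map, ← map_smul'', smul_eq_mul, Ideal.mul_top]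

lemma Ideal.absNorm_le_abs_norm_of_mem {S : Type*} [CommRing S] [IsDedekindDomain S]
    [Module.Free ℤ S] [Module.Finite ℤ S] {I : Ideal S} {x : S} (hx : x ∈ I) (hx0 : x ≠ 0) :
    (Ideal.absNorm I : ℤ) ≤ |Algebra.norm ℤ x| :=
  Int.le_of_dvd (abs_pos.mpr (Algebra.norm_ne_zero_iff.mpr hx0))
    ((dvd_abs _ _).mpr (Ideal.absNorm_dvd_norm_of_mem hx))

lemma exists_absNorm_le_mul_pow_abs_smulTower_repr {F V ι κ : Type*} [Field F] [NumberField F]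
    [AddCommGroup V] [Module F V] [Module ℚ V] [IsScalarTower ℚ F V] [Module (𝓞 F) V]
    [IsScalarTower (𝓞 F) F V] [Fintype ι] [Finite κ] (bF : Module.Basis ι ℚ F)
    (e : Module.Basis κ F V) {Λ : Submodule (𝓞 F) V} (hΛ : Λ.FG) :
    ∃ K : ℚ, 0 < K ∧ ∀ (𝔫 : Ideal (𝓞 F)), ∀ u ∈ 𝔫 • Λ, u ≠ 0 →
      ∃ p, (Ideal.absNorm 𝔫 : ℚ) ≤ K * |(bF.smulTower e).repr u p| ^ Fintype.card ι := by
  have := bF.index_nonempty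
  obtain ⟨C, hC, hnorm⟩ := Algebra.exists_abs_norm_le_mul_pow_abs_repr bF
  obtain ⟨b, hb⟩ := hΛ.exists_map_ideal_smul_le (𝓞 F)⁰ fun i => (e.coord i).restrictScalars (𝓞 F)
  set β : F := algebraMap (𝓞 F) F b
  have hβ : β ≠ 0 := (map_ne_zero_iff _ (IsFractionRing.injective (𝓞 F) F)).mpr
    (nonZeroDivisors.coe_ne_zero b)
  have hNβ : Algebra.norm ℚ β ≠ 0 := Algebra.norm_ne_zero_iff.mpr hβ
  refine ⟨|Algebra.norm ℚ β| * C, by positivity, fun 𝔫 u hu hu0 => ?_⟩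
  obtain ⟨i, hi⟩ : ∃ i, e.repr u i ≠ 0 := by
    by_contra! h
    exact hu0 (e.repr.map_eq_zero_iff.mp (Finsupp.ext h))
  obtain ⟨w, hw𝔫, hw⟩ := hb 𝔫 i (Submodule.mem_map_of_mem hu)
  have hw' : algebraMap (𝓞 F) F w = β * e.repr u i := by
    simpa [Algebra.smul_def] using hw
  have hw0 : w ≠ 0 := by
    rintro rfl
    simp [hβ, hi] at hw'
  obtain ⟨k, hk⟩ := hnorm (e.repr u i)
  refine ⟨(k, i), ?_⟩
  rw [Module.Basis.smulTower_repr_mk]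
  calc (Ideal.absNorm 𝔫 : ℚ) ≤ |Algebra.norm ℚ (algebraMap (𝓞 F) F w)| := by
        rw [← RingOfIntegers.coe_eq_algebraMap, ← Algebra.coe_norm_int, ← Int.cast_abs]
        exact_mod_cast Ideal.absNorm_le_abs_norm_of_mem hw𝔫 hw0
    _ = |Algebra.norm ℚ β| * |Algebra.norm ℚ (e.repr u i)| := by rw [hw', map_mul, abs_mul]
    _ ≤ _ := by
        rw [mul_assoc]
        gcongr

theorem stmt_2_general (F : Type*) [Field F] [NumberField F]
    (V : Type*) [AddCommGroup V] [Module F V] [FiniteDimensional F V]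
    [Module ℚ V] [IsScalarTower ℚ F V]
    [Module (𝓞 F) V] [IsScalarTower (𝓞 F) F V]
    (Λ : Submodule (𝓞 F) V) (hΛfg : Λ.FG)
    (D : Set (V ⊗[ℚ] ℝ)) (hD : IsCompact D) :
    ∃ C : ℝ, 0 < C ∧ ∀ a : ℝ, 0 < a → ∀ 𝔫 : Ideal (𝓞 F), 𝔫 ≠ 0 →
      (a • D ∩ ((fun x : V => x ⊗ₜ[ℚ] (1 : ℝ)) ''
        (((𝔫 • Λ : Submodule (𝓞 F) V) : Set V) \ {0}))).Finite ∧
      ((a • D ∩ ((fun x : V => x ⊗ₜ[ℚ] (1 : ℝ)) ''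
        (((𝔫 • Λ : Submodule (𝓞 F) V) : Set V) \ {0}))).ncard : ℝ) ≤
        C * (a ^ (Module.finrank ℚ F) / (Ideal.absNorm 𝔫 : ℝ)) ^ (Module.finrank F V) := by
  set d := Module.finrank ℚ F
  set n := Module.finrank F V
  let B := (Module.finBasis ℚ F).smulTower (Module.finBasis F V)
  obtain ⟨K, hK, hlower⟩ := exists_absNorm_le_mul_pow_abs_smulTower_repr
    (Module.finBasis ℚ F) (Module.finBasis F V) hΛfg
  obtain ⟨R, hR, hRD⟩ := (hD.image (IsModuleTopology.continuous_of_linearMap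
    B.tensorRealRepr)).isBounded.exists_pos_norm_le
  refine ⟨(5 * R) ^ (d * n) * K ^ n, by positivity, fun a ha 𝔫 h𝔫 => ?_⟩
  have hN : (0 : ℝ) < Ideal.absNorm 𝔫 := by
    exact_mod_cast Ideal.absNorm_pos_iff_mem_nonZeroDivisors.mpr (mem_nonZeroDivisors_of_ne_zero h𝔫)
  have hd : (0 : ℝ) < d := by exact_mod_cast Module.finrank_pos
  set δ := ((Ideal.absNorm 𝔫 : ℝ) / K) ^ ((d : ℝ)⁻¹)
  have hδd : δ ^ d = Ideal.absNorm 𝔫 / K := by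
    rw [← Real.rpow_natCast, ← Real.rpow_mul (by positivity), inv_mul_cancel₀ hd.ne',
      Real.rpow_one]
  have hδ : ∀ u ∈ 𝔫 • Λ, u ≠ 0 → δ ≤ ‖B.tensorRealRepr (u ⊗ₜ 1)‖ := by
    intro u hu hu0
    obtain ⟨p, hp⟩ := hlower 𝔫 u hu hu0
    rw [Fintype.card_fin] at hp
    refine le_trans ?_ (norm_le_pi_norm _ p)
    rw [Module.Basis.tensorRealRepr_tmul_one, Real.norm_eq_abs,
      Real.rpow_inv_le_iff_of_pos (by positivity) (abs_nonneg _) hd, Real.rpow_natCast,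
      div_le_iff₀ (by positivity), mul_comm]
    beta_reduce
    exact_mod_cast hp
  refine (finite_and_ncard_smul_inter_tmul_le _ _ D ha.le hR.le
    (fun x hx => hRD _ (Set.mem_image_of_mem _ hx)) (by positivity) hδ).imp_right (·.trans_eq ?_)
  rw [Fintype.card_prod, Fintype.card_fin, Fintype.card_fin, pow_mul, div_pow, hδd]
  field_simp
  ring

/-- Let `F` be a number field of degree `d = [F:ℚ]`, `V` a finite-dimensional `F`-vector
space, `Λ ⊆ V` an `𝒪_F`-lattice, and `D` a compact subset of `V_∞ = V ⊗_ℚ ℝ`. Then there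
is `C > 0` (depending only on `D` and `Λ`) such that for every real `a > 0` and every
nonzero integral ideal `𝔫`, the set `a•D ∩ ((𝔫Λ) ∖ {0})` (inside `V_∞`, with `V` embedded
via `x ↦ x ⊗ 1`) is finite with at most `C · (a ^ d / N(𝔫)) ^ (dim_F V)` elements. -/
theorem stmt_2 (F : Type*) [Field F] [NumberField F]
    (V : Type*) [AddCommGroup V] [Module F V] [FiniteDimensional F V]
    [Module ℚ V] [IsScalarTower ℚ F V]
    [Module (𝓞 F) V] [IsScalarTower (𝓞 F) F V]
    (Λ : Submodule (𝓞 F) V) (hΛfg : Λ.FG) (hΛspan : Submodule.span F (Λ : Set V) = ⊤)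
    (D : Set (V ⊗[ℚ] ℝ)) (hD : IsCompact D) :
    ∃ C : ℝ, 0 < C ∧ ∀ a : ℝ, 0 < a → ∀ 𝔫 : Ideal (𝓞 F), 𝔫 ≠ 0 →
      (a • D ∩ ((fun x : V => x ⊗ₜ[ℚ] (1 : ℝ)) ''
        (((𝔫 • Λ : Submodule (𝓞 F) V) : Set V) \ {0}))).Finite ∧
      ((a • D ∩ ((fun x : V => x ⊗ₜ[ℚ] (1 : ℝ)) ''
        (((𝔫 • Λ : Submodule (𝓞 F) V) : Set V) \ {0}))).ncard : ℝ) ≤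
        C * (a ^ (Module.finrank ℚ F) / (Ideal.absNorm 𝔫 : ℝ)) ^ (Module.finrank F V) :=
  stmt_2_general F V Λ hΛfg D hD
end

section
/- Let Φ be an irreducible (possibly non-reduced) crystallographic root system in a finite-dimensional real inner product space E, let Φ⁺ be a positive system for Φ, and let θ be the highest root of Φ⁺. Let m : Φ → ℝ_{≥0} be invariant under the Weyl group W_Φ, set ρ = (1/2) ∑_{α ∈ Φ⁺} m(α)·α, and d = ⟨ρ, θ^∨⟩ = 2(ρ, θ)/(θ, θ). Then for every β ∈ Φ⁺ and every subset S ⊆ Φ⁺, the vector ∑_{α ∈ Φ⁺ ∖ S} m(α)·α + (∑_{α ∈ S} m(α))·β − d·β lies in the closed convex cone ∑_{α ∈ Φ⁺} ℝ_{≥0}·α spanned by the positive roots. -/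
open scoped RealInnerProductSpace

open scoped Classical in
/-- Let `Φ` be an irreducible (possibly non-reduced) crystallographic root system in a
finite-dimensional real inner product space `E`, with positive system `Φp` (cut out by a
linear functional `f` nonvanishing on roots) and highest root `θ`. Let `m : Φ → ℝ≥0` be
invariant under the Weyl group (equivalently, under all root reflections), let
`ρ = (1/2) ∑_{α ∈ Φ⁺} m(α)·α` and `d = ⟨ρ, θ^∨⟩ = 2(ρ,θ)/(θ,θ)`. Then for every
`β ∈ Φ⁺` and every `S ⊆ Φ⁺`, the vector
`∑_{α ∈ Φ⁺ ∖ S} m(α)·α + (∑_{α ∈ S} m(α))·β − d·β` lies in the cone `∑_{α ∈ Φ⁺} ℝ≥0·α`. -/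
theorem stmt_4 (E : Type*) [NormedAddCommGroup E] [InnerProductSpace ℝ E]
    [FiniteDimensional ℝ E]
    (Φ : Finset E)
    (hspan : Submodule.span ℝ (Φ : Set E) = ⊤)
    (h0 : (0 : E) ∉ Φ)
    (hcrys : ∀ α ∈ Φ, ∀ β ∈ Φ, ∃ k : ℤ, 2 * ⟪β, α⟫ = (k : ℝ) * ⟪α, α⟫)
    (hrefl : ∀ α ∈ Φ, ∀ β ∈ Φ, β - (2 * ⟪β, α⟫ / ⟪α, α⟫) • α ∈ Φ)
    (hirr : ¬ ∃ Φ₁ Φ₂ : Finset E, Φ₁.Nonempty ∧ Φ₂.Nonempty ∧ Disjoint Φ₁ Φ₂ ∧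
      Φ = Φ₁ ∪ Φ₂ ∧ ∀ α ∈ Φ₁, ∀ β ∈ Φ₂, ⟪α, β⟫ = 0)
    (f : E →ₗ[ℝ] ℝ) (hf : ∀ α ∈ Φ, f α ≠ 0)
    (Φp : Finset E) (hΦp : ∀ α, α ∈ Φp ↔ α ∈ Φ ∧ 0 < f α)
    (θ : E) (hθ : θ ∈ Φp)
    (hθhigh : ∀ α ∈ Φ, ∃ c : E → ℝ, (∀ γ, 0 ≤ c γ) ∧ θ - α = ∑ γ ∈ Φp, c γ • γ)
    (m : E → ℝ) (hm0 : ∀ α ∈ Φ, 0 ≤ m α)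
    (hminv : ∀ α ∈ Φ, ∀ β ∈ Φ, m (β - (2 * ⟪β, α⟫ / ⟪α, α⟫) • α) = m β)
    (β : E) (hβ : β ∈ Φp) (S : Finset E) (hS : S ⊆ Φp) :
    ∃ c : E → ℝ, (∀ γ, 0 ≤ c γ) ∧
      (∑ α ∈ Φp \ S, m α • α) + (∑ α ∈ S, m α) • β
        - (2 * ⟪(2 : ℝ)⁻¹ • ∑ α ∈ Φp, m α • α, θ⟫ / ⟪θ, θ⟫) • β
      = ∑ γ ∈ Φp, c γ • γ := by
  classical
  have hΦpΦ : ∀ {α : E}, α ∈ Φp → α ∈ Φ := fun hα => ((hΦp _).1 hα).1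
  have hfpos : ∀ {α : E}, α ∈ Φp → 0 < f α := fun hα => ((hΦp _).1 hα).2
  have hnz : ∀ {γ : E}, γ ∈ Φ → (0:ℝ) < ⟪γ, γ⟫ := by
    intro γ hγ
    have hne : γ ≠ 0 := fun h => h0 (h ▸ hγ)
    exact lt_of_le_of_ne real_inner_self_nonneg (Ne.symm (inner_self_ne_zero.2 hne))
  have hθΦ : θ ∈ Φ := hΦpΦ hθ
  have hθθ : (0:ℝ) < ⟪θ, θ⟫ := hnz hθΦ
  -- the cone
  set InC : E → Prop := fun x => ∃ c : E → ℝ, (∀ γ, 0 ≤ c γ) ∧ x = ∑ γ ∈ Φp, c γ • γ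
    with hInC
  have InC_zero : InC 0 := ⟨fun _ => 0, fun _ => le_rfl, by simp⟩
  have InC_add : ∀ {x y : E}, InC x → InC y → InC (x + y) := by
    rintro x y ⟨c, hc, rfl⟩ ⟨c', hc', rfl⟩
    exact ⟨c + c', fun γ => add_nonneg (hc γ) (hc' γ), by
      simp [add_smul, Finset.sum_add_distrib]⟩
  have InC_smul : ∀ {r : ℝ} {x : E}, 0 ≤ r → InC x → InC (r • x) := by
    rintro r x hr ⟨c, hc, rfl⟩
    exact ⟨fun γ => r * c γ, fun γ => mul_nonneg hr (hc γ), by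
      simp [Finset.smul_sum, mul_smul]⟩
  have InC_root : ∀ {γ : E}, γ ∈ Φp → InC γ := by
    intro γ hγ
    refine ⟨fun δ => if δ = γ then 1 else 0, fun δ => by dsimp; split <;> norm_num, ?_⟩
    rw [Finset.sum_eq_single_of_mem γ hγ (fun b _ hb => by simp [hb])]
    simp
  have InC_sum : ∀ (h : E → E), (∀ a ∈ Φp, InC (h a)) → InC (∑ a ∈ Φp, h a) := by
    intro h hh
    exact Finset.sum_induction h InC (fun _ _ ha hb => InC_add ha hb) InC_zero hh
  have f_nonneg : ∀ {x : E}, InC x → 0 ≤ f x := by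
    rintro x ⟨c, hc, rfl⟩
    rw [map_sum]
    refine Finset.sum_nonneg fun γ hγ => ?_
    rw [map_smul, smul_eq_mul]
    exact mul_nonneg (hc γ) (hfpos hγ).le
  have memΦp : ∀ {δ : E}, δ ∈ Φ → InC δ → δ ∈ Φp := by
    intro δ hδ hC
    refine (hΦp δ).2 ⟨hδ, ?_⟩
    rcases (f_nonneg hC).lt_or_eq with h | h
    · exact h
    · exact absurd h.symm (hf δ hδ)
  have highC : ∀ {α : E}, α ∈ Φ → InC (θ - α) := fun {α} hα => hθhigh α hα
  have neg_mem : ∀ {γ : E}, γ ∈ Φ → -γ ∈ Φ := by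
    intro γ hγ
    have h2 : 2 * ⟪γ, γ⟫ / ⟪γ, γ⟫ = 2 := by
      rw [mul_div_assoc, div_self (hnz hγ).ne', mul_one]
    have h3 := hrefl γ hγ γ hγ
    rw [h2] at h3
    have h4 : γ - (2:ℝ) • γ = -γ := by module
    rwa [h4] at h3
  have m_neg : ∀ {γ : E}, γ ∈ Φ → m (-γ) = m γ := by
    intro γ hγ
    have h2 : 2 * ⟪γ, γ⟫ / ⟪γ, γ⟫ = 2 := by
      rw [mul_div_assoc, div_self (hnz hγ).ne', mul_one]
    have h3 := hminv γ hγ γ hγ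
    rw [h2] at h3
    have h4 : γ - (2:ℝ) • γ = -γ := by module
    rwa [h4] at h3
  -- positivity of inner products with θ
  have LemC : ∀ {α : E}, α ∈ Φp → 0 ≤ ⟪α, θ⟫ := by
    intro α hα
    by_contra hlt
    push_neg at hlt
    have hαΦ := hΦpΦ hα
    have hr := hrefl α hαΦ θ hθΦ
    have hC := highC hr
    rw [sub_sub_cancel] at hC
    have hcneg : 2 * ⟪θ, α⟫ / ⟪α, α⟫ < 0 := by
      apply div_neg_of_neg_of_pos _ (hnz hαΦ)
      rw [real_inner_comm]
      linarith
    have h5 := f_nonneg hC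
    rw [map_smul, smul_eq_mul] at h5
    nlinarith [hfpos hα]
  -- the highest root has the largest pairing
  have LemA : ∀ {α : E}, α ∈ Φp → ⟪α, θ⟫ ≤ ⟪θ, θ⟫ := by
    intro α hα
    by_contra hlt
    push_neg at hlt
    have hαΦ := hΦpΦ hα
    have hαα := hnz hαΦ
    have hαθpos : 0 < ⟪α, θ⟫ := lt_trans hθθ hlt
    obtain ⟨k, hk⟩ := hcrys α hαΦ θ hθΦ
    have hCS := real_inner_mul_inner_self_le α θ
    have hθα : ⟪θ, α⟫ = ⟪α, θ⟫ := real_inner_comm α θ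
    -- k = 1
    have hk1 : (k:ℝ) = 1 := by
      have hkpos : (0:ℝ) < k := by nlinarith
      have hklt : (k:ℝ) < 2 := by nlinarith
      have h1 : (1:ℤ) ≤ k := by exact_mod_cast (by exact_mod_cast hkpos : (0:ℤ) < k)
      have h2 : k < 2 := by exact_mod_cast hklt
      have : k = 1 := by omega
      exact_mod_cast this
    rw [hk1, one_mul] at hk
    have hco : 2 * ⟪θ, α⟫ / ⟪α, α⟫ = 1 := by
      rw [hk, div_self hαα.ne']
    have hr := hrefl α hαΦ θ hθΦ
    rw [hco, one_smul] at hr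
    have hδp : θ - α ∈ Φp := memΦp hr (highC hαΦ)
    have h6 := LemC hδp
    rw [inner_sub_left] at h6
    linarith
  -- only θ pairs maximally with θ
  have LemB : ∀ {α : E}, α ∈ Φp → ⟪α, θ⟫ = ⟪θ, θ⟫ → α = θ := by
    intro α hα heq
    have hαΦ := hΦpΦ hα
    have hαα := hnz hαΦ
    obtain ⟨k, hk⟩ := hcrys α hαΦ θ hθΦ
    have hθα : ⟪θ, α⟫ = ⟪α, θ⟫ := real_inner_comm α θ
    have hCS := real_inner_mul_inner_self_le α θ
    have hθα' : ⟪θ, α⟫ = ⟪θ, θ⟫ := by rw [hθα, heq]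
    have hααθ : ⟪θ, θ⟫ ≤ ⟪α, α⟫ := by nlinarith
    have hk12 : k = 1 ∨ k = 2 := by
      have hkpos : (0:ℝ) < k := by nlinarith
      have hkle : (k:ℝ) ≤ 2 := by nlinarith
      have h1 : (1:ℤ) ≤ k := by exact_mod_cast (by exact_mod_cast hkpos : (0:ℤ) < k)
      have h2 : k ≤ 2 := by exact_mod_cast hkle
      omega
    rcases hk12 with hk1 | hk2
    · -- k = 1 : leads to a contradiction
      exfalso
      have hθαθ : ⟪θ, α⟫ = ⟪θ, θ⟫ := by rw [hθα, heq]
      rw [hk1] at hk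
      push_cast at hk
      have hαα2 : ⟪α, α⟫ = 2 * ⟪θ, θ⟫ := by
        rw [one_mul] at hk
        linarith [hk, hθαθ]
      have hco : 2 * ⟪θ, α⟫ / ⟪α, α⟫ = 1 := by
        rw [hθαθ, hαα2, div_self (by positivity)]
      have hr := hrefl α hαΦ θ hθΦ
      rw [hco, one_smul] at hr
      have hδΦ : θ - α ∈ Φ := hr
      have hδp : θ - α ∈ Φp := memΦp hδΦ (highC hαΦ)
      have hδδ : ⟪θ - α, θ - α⟫ = ⟪θ, θ⟫ := by
        rw [inner_sub_left, inner_sub_right, inner_sub_right, hθαθ, heq, hαα2]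
        ring
      have hαδ : ⟪α, θ - α⟫ = -⟪θ, θ⟫ := by
        rw [inner_sub_right, heq, hαα2]
        ring
      have hco2 : 2 * ⟪α, θ - α⟫ / ⟪θ - α, θ - α⟫ = -2 := by
        rw [hαδ, hδδ, div_eq_iff hθθ.ne']
        ring
      have hr2 := hrefl (θ - α) hδΦ α hαΦ
      rw [hco2] at hr2
      have hC2 := highC hr2
      have he3 : θ - (α - (-2:ℝ) • (θ - α)) = α - θ := by module
      rw [he3] at hC2
      have h7 := f_nonneg hC2
      have h8 := hfpos hδp
      rw [map_sub] at h7
      rw [map_sub] at h8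
      linarith
    · -- k = 2 : α = θ
      have hθαθ : ⟪θ, α⟫ = ⟪θ, θ⟫ := by rw [hθα, heq]
      rw [hk2] at hk
      push_cast at hk
      have hααeq : ⟪α, α⟫ = ⟪θ, θ⟫ := by linarith [hk, hθαθ]
      have hz : ⟪α - θ, α - θ⟫ = 0 := by
        rw [inner_sub_left, inner_sub_right, inner_sub_right, heq, hθαθ, hααeq]
        ring
      have := inner_self_eq_zero.1 hz
      exact sub_eq_zero.1 this
  -- weight function and summand
  set w : E → ℝ := fun α => ⟪α, θ⟫ / ⟪θ, θ⟫ with hw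
  set g : E → E := fun α =>
    if α ∈ S then (m α * (1 - w α)) • β else (m α • α - (m α * w α) • β) with hg
  -- the target equals the sum of g over Φp
  have hsum : ∑ α ∈ Φp, g α
      = (∑ α ∈ Φp \ S, m α • α) + (∑ α ∈ S, m α) • β
        - (2 * ⟪(2 : ℝ)⁻¹ • ∑ α ∈ Φp, m α • α, θ⟫ / ⟪θ, θ⟫) • β := by
    have hd : 2 * ⟪(2 : ℝ)⁻¹ • ∑ α ∈ Φp, m α • α, θ⟫ / ⟪θ, θ⟫
        = ∑ α ∈ Φp, m α * w α := by
      rw [real_inner_smul_left, sum_inner]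
      have h2 : (2:ℝ) * (2⁻¹ * (∑ α ∈ Φp, ⟪m α • α, θ⟫)) / ⟪θ, θ⟫
          = (∑ α ∈ Φp, ⟪m α • α, θ⟫) / ⟪θ, θ⟫ := by ring
      rw [h2, Finset.sum_div]
      refine Finset.sum_congr rfl fun α _ => ?_
      rw [real_inner_smul_left, hw]
      ring
    rw [hd, ← Finset.sum_sdiff hS (f := g)]
    have e1 : ∑ α ∈ Φp \ S, g α = ∑ α ∈ Φp \ S, (m α • α - (m α * w α) • β) :=
      Finset.sum_congr rfl fun α hα => by
        have hns : α ∉ S := (Finset.mem_sdiff.1 hα).2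
        simp [hg, hns]
    have e2 : ∑ α ∈ S, g α = ∑ α ∈ S, (m α * (1 - w α)) • β :=
      Finset.sum_congr rfl fun α hα => by simp [hg, hα]
    rw [e1, e2, Finset.sum_sub_distrib, ← Finset.sum_smul, ← Finset.sum_smul,
      ← Finset.sum_sdiff hS (f := fun α => m α * w α)]
    have e3 : ∑ α ∈ S, m α * (1 - w α) = (∑ α ∈ S, m α) - ∑ α ∈ S, m α * w α := by
      rw [← Finset.sum_sub_distrib]
      exact Finset.sum_congr rfl fun α _ => by ring
    rw [e3]
    module
  -- reduce to showing the sum of g lies in the cone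
  suffices hkey : InC (∑ α ∈ Φp, g α) by
    rw [hsum] at hkey
    exact hkey
  -- the involution
  set σ : E → E := fun α => if 2 * ⟪α, θ⟫ = ⟪θ, θ⟫ then θ - α else α with hσ
  have hP : ∀ {α : E}, α ∈ Φp → 2 * ⟪α, θ⟫ = ⟪θ, θ⟫ →
      (θ - α ∈ Φp ∧ m (θ - α) = m α ∧ 2 * ⟪θ - α, θ⟫ = ⟪θ, θ⟫) := by
    intro α hα hPα
    have hαΦ := hΦpΦ hα
    have hco : 2 * ⟪α, θ⟫ / ⟪θ, θ⟫ = 1 := by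
      rw [hPα]
      field_simp
    have hr := hrefl θ hθΦ α hαΦ
    rw [hco, one_smul] at hr
    have hδΦ : θ - α ∈ Φ := by
      have h2 := neg_mem hr
      rwa [neg_sub] at h2
    refine ⟨memΦp hδΦ (highC hαΦ), ?_, ?_⟩
    · have h1 := hminv θ hθΦ α hαΦ
      rw [hco, one_smul] at h1
      have h2 := m_neg hr
      rw [neg_sub] at h2
      rw [h2, h1]
    · rw [inner_sub_left]
      linarith
  have hσmem : ∀ a ∈ Φp, σ a ∈ Φp := by
    intro a ha
    by_cases h : 2 * ⟪a, θ⟫ = ⟪θ, θ⟫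
    · rw [hσ]; simp only [if_pos h]; exact (hP ha h).1
    · rw [hσ]; simp only [if_neg h]; exact ha
  have hσσ : ∀ a ∈ Φp, σ (σ a) = a := by
    intro a ha
    by_cases h : 2 * ⟪a, θ⟫ = ⟪θ, θ⟫
    · have h2 := (hP ha h).2.2
      rw [hσ]
      simp only [if_pos h, if_pos h2, sub_sub_cancel]
    · rw [hσ]
      simp only [if_neg h]
  have hsumσ : ∑ α ∈ Φp, g α = ∑ α ∈ Φp, g (σ α) :=
    Finset.sum_nbij' σ σ hσmem hσmem hσσ hσσ
      (fun a ha => (congrArg g (hσσ a ha)).symm)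
  have h2half : ∑ α ∈ Φp, g α = ∑ α ∈ Φp, (2⁻¹ : ℝ) • (g α + g (σ α)) := by
    have hstep : ∑ α ∈ Φp, g α
        = (2⁻¹ : ℝ) • ((∑ α ∈ Φp, g α) + ∑ α ∈ Φp, g (σ α)) := by
      rw [← hsumσ]
      module
    rw [hstep, ← Finset.sum_add_distrib, Finset.smul_sum]
  rw [h2half]
  refine InC_sum _ fun α hα => InC_smul (by norm_num) ?_
  have hαΦ := hΦpΦ hα
  have hm := hm0 α hαΦ
  by_cases hPα : 2 * ⟪α, θ⟫ = ⟪θ, θ⟫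
  · -- the paired case
    obtain ⟨hδp, hmδ, hPδ⟩ := hP hα hPα
    have hwα : w α = 2⁻¹ := by
      simp only [hw]
      rw [div_eq_iff hθθ.ne']
      linarith
    have hwδ : w (θ - α) = 2⁻¹ := by
      simp only [hw]
      rw [div_eq_iff hθθ.ne']
      linarith [hPδ]
    have hσα : σ α = θ - α := by rw [hσ]; simp only [if_pos hPα]
    rw [hσα]
    by_cases h1 : α ∈ S <;> by_cases h2 : θ - α ∈ S
    · have he : g α + g (θ - α) = m α • β := by
        rw [hg]
        simp only [if_pos h1, if_pos h2, hmδ, hwα, hwδ]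
        module
      rw [he]
      exact InC_smul hm (InC_root hβ)
    · have he : g α + g (θ - α) = m α • (θ - α) := by
        rw [hg]
        simp only [if_pos h1, if_neg h2, hmδ, hwα, hwδ]
        module
      rw [he]
      exact InC_smul hm (InC_root hδp)
    · have he : g α + g (θ - α) = m α • α := by
        rw [hg]
        simp only [if_neg h1, if_pos h2, hmδ, hwα, hwδ]
        module
      rw [he]
      exact InC_smul hm (InC_root hα)
    · have he : g α + g (θ - α) = m α • (θ - β) := by
        rw [hg]
        simp only [if_neg h1, if_neg h2, hmδ, hwα, hwδ]
        module
      rw [he]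
      exact InC_smul hm (highC (hΦpΦ hβ))
  · -- the fixed case
    have hσα : σ α = α := by rw [hσ]; simp only [if_neg hPα]
    rw [hσα]
    by_cases h1 : α ∈ S
    · have he : g α = (m α * (1 - w α)) • β := by rw [hg]; simp only [if_pos h1]
      rw [he]
      have hwle : w α ≤ 1 := by
        simp only [hw]
        exact div_le_one_of_le₀ (LemA hα) hθθ.le
      have hcn : 0 ≤ m α * (1 - w α) := mul_nonneg hm (by linarith)
      exact InC_add (InC_smul hcn (InC_root hβ)) (InC_smul hcn (InC_root hβ))
    · obtain ⟨k, hk⟩ := hcrys θ hθΦ α hαΦ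
      have hk0 : (0:ℤ) ≤ k := by
        have := LemC hα
        have hkr : (0:ℝ) ≤ k := by nlinarith
        exact_mod_cast hkr
      have hk2 : k ≤ 2 := by
        have := LemA hα
        have hkr : (k:ℝ) ≤ 2 := by nlinarith
        exact_mod_cast hkr
      have hk1 : k ≠ 1 := by
        intro h
        rw [h] at hk
        push_cast at hk
        rw [one_mul] at hk
        exact hPα hk
      have hk02 : k = 0 ∨ k = 2 := by omega
      rcases hk02 with h | h
      · rw [h] at hk
        push_cast at hk
        rw [zero_mul] at hk
        have hw0 : w α = 0 := by
          simp only [hw]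
          have : ⟪α, θ⟫ = 0 := by linarith
          rw [this, zero_div]
        have he : g α = m α • α := by
          rw [hg]
          simp only [if_neg h1, hw0, mul_zero, zero_smul, sub_zero]
        rw [he]
        exact InC_add (InC_smul hm (InC_root hα)) (InC_smul hm (InC_root hα))
      · rw [h] at hk
        push_cast at hk
        have hieq : ⟪α, θ⟫ = ⟪θ, θ⟫ := by linarith
        have hαθ : α = θ := LemB hα hieq
        have hw1 : w α = 1 := by
          simp only [hw]
          rw [hieq, div_self hθθ.ne']
        have he : g α + g α = (2 * m α) • (θ - β) := by
          simp only [hg, if_neg h1, hw1, mul_one]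
          rw [hαθ]
          module
        rw [he]
        exact InC_smul (by linarith) (highC (hΦpΦ hβ))
end

section
/- Let V be a complex normed vector space, let z_1, …, z_m ∈ ℂ with |z_j| ≠ 1 for all j, and let A : ℂ ∖ {z_1, …, z_m} → V be a function such that (z − z_1)⋯(z − z_m)·A(z) agrees there with a polynomial of degree at most n with coefficients in V, and such that ‖A(z)‖ ≤ 1 for all z with |z| = 1. Then ∫_{S¹} ‖A'(z)‖ |dz| := ∫_0^{2π} ‖A'(e^{iθ})‖ dθ ≤ 2π · max(m, n). -/
/-!
On the unit circle, `‖A' ζ‖ ≤ (n - m) + ∑ j, |P(z j, ζ)|` (truncated subtraction), where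
`P(a, ζ) = (1 - |a|²) / |ζ - a|²` is the Poisson kernel. Each `|P(z j, ·)|` has circle average `1`,
so integrating gives `2π ((n - m) + m) = 2π max m n`.

By Hahn–Banach it suffices to treat `r = P / Q` with `Q = ∏ (X - z j)`, and `r' = W(Q, P) / Q²` for
the Wronskian `W`. The bound on `W(Q, P)(ζ)` is a Borwein–Erdélyi comparison. For a polynomial `H`,
`2 Re (ζ H'(ζ) / H(ζ)) = deg H + ∑ P(r, ζ)` over the roots `r` of `H`: this exceeds `deg H` when all
roots lie inside the disc and falls short of it when all lie outside; for `Q` it is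
`m + ∑ j, P(z j, ζ)`. According as `∑ j, P(z j, ζ)` is at most or more than `n - m`, let `G` be
`X ^ (n - m) Q` with the exterior poles reflected to `1 / conj (z j)`, or `Q` with the interior
poles reflected. Then `|P| ≤ |Q| = |G|` on the circle, so by the maximum principle every `G - t P`
with `|t| < 1` has its roots on the same side as those of `G`, hence `W(Q, G - t P)(ζ) ≠ 0`. By
linearity of `W` this forces `|W(Q, P)(ζ)| ≤ |W(Q, G)(ζ)|`, which is explicit.
-/

open scoped Real ComplexConjugate
open Complex Polynomial Metric Lagrange

theorem two_mul_re_mul_inv_sub {ζ a : ℂ} (h : ζ ≠ a) :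
    2 * (ζ * (ζ - a)⁻¹).re = 1 + poissonKernel 0 a ζ := by
  have : (ζ + a) / (ζ - a) = 2 * (ζ * (ζ - a)⁻¹) - 1 := by
    field_simp [sub_ne_zero.mpr h]; ring
  rw [poissonKernel_eq_re_herglotzRieszKernel, Function.comp_apply, herglotzRieszKernel]
  simp [this, mul_re]

theorem poissonKernel_zero_of_norm_eq_one {ζ : ℂ} (hζ : ‖ζ‖ = 1) (a : ℂ) :
    poissonKernel 0 a ζ = (1 - ‖a‖ ^ 2) / ‖ζ - a‖ ^ 2 := by
  simp [poissonKernel, hζ]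

theorem poissonKernel_zero_pos {ζ a : ℂ} (h : ‖a‖ < ‖ζ‖) : 0 < poissonKernel 0 a ζ := by
  have hne : ζ - a ≠ 0 := by rintro h0; rw [sub_eq_zero.mp h0] at h; exact lt_irrefl _ h
  simp only [poissonKernel, sub_zero]
  exact div_pos (by nlinarith [norm_nonneg a]) (by positivity)

theorem poissonKernel_zero_neg {ζ a : ℂ} (h : ‖ζ‖ < ‖a‖) : poissonKernel 0 a ζ < 0 := by
  have hne : ζ - a ≠ 0 := by rintro h0; rw [sub_eq_zero.mp h0] at h; exact lt_irrefl _ h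
  simp only [poissonKernel, sub_zero]
  exact div_neg_of_neg_of_pos (by nlinarith [norm_nonneg ζ]) (by positivity)

theorem one_sub_conj_mul_eq {u : ℂ} (hu : ‖u‖ = 1) (a : ℂ) :
    1 - conj a * u = u * conj (u - a) := by
  have : u * conj u = 1 := by rw [mul_conj, normSq_eq_norm_sq, hu]; simp
  rw [map_sub, mul_sub, this]; ring

theorem one_sub_conj_mul_ne_zero {u a : ℂ} (hu : ‖u‖ = 1) (h : u ≠ a) : 1 - conj a * u ≠ 0 := by
  have hu0 : u ≠ 0 := by rintro rfl; simp at hu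
  rw [one_sub_conj_mul_eq hu]
  exact mul_ne_zero hu0 ((_root_.map_ne_zero (starRingEnd ℂ)).mpr (sub_ne_zero.mpr h))

theorem poissonKernel_zero_inv_conj {ζ a : ℂ} (hζ : ‖ζ‖ = 1) (ha : a ≠ 0) :
    poissonKernel 0 (conj a)⁻¹ ζ = -poissonKernel 0 a ζ := by
  have hfac : ζ - (conj a)⁻¹ = -(conj a)⁻¹ * (1 - conj a * ζ) := by
    have : conj a ≠ 0 := by simpa using ha
    field_simp; ring
  have hna : 0 < ‖a‖ := norm_pos_iff.mpr ha
  simp only [poissonKernel, sub_zero, hfac, one_sub_conj_mul_eq hζ, norm_mul, norm_neg, norm_inv,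
    RCLike.norm_conj, hζ]
  field_simp
  ring

theorem circleAverage_poissonKernel_zero {a : ℂ} (ha : ‖a‖ < 1) :
    Real.circleAverage (poissonKernel 0 a) 0 1 = 1 := by
  have h := (diffContOnCl_const (c := (1 : ℂ))).circleAverage_poissonKernel_smul
    (c := 0) (R := 1) (w := a) (by simpa using ha)
  simp only [Real.circleAverage, Pi.smul_apply', real_smul, mul_one,
    intervalIntegral.integral_ofReal] at h ⊢
  exact_mod_cast h

/-- Reflection in the unit circle turns the Poisson kernel of an exterior point into minus that of
an interior one. -/
theorem circleAverage_abs_poissonKernel_zero {a : ℂ} (ha : ‖a‖ ≠ 1) :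
    Real.circleAverage (fun ζ => |poissonKernel 0 a ζ|) 0 1 = 1 := by
  rcases ha.lt_or_gt with ha | ha
  · refine (Real.circleAverage_congr_sphere fun ζ hζ => ?_).trans
      (circleAverage_poissonKernel_zero ha)
    have hζ : ‖ζ‖ = 1 := by simpa using hζ
    rw [abs_of_pos (poissonKernel_zero_pos (by rwa [hζ]))]
  · have ha0 : a ≠ 0 := by rintro rfl; simp at ha; linarith
    have hb : ‖(conj a)⁻¹‖ < 1 := by
      rw [norm_inv, RCLike.norm_conj]; exact inv_lt_one_of_one_lt₀ ha
    refine (Real.circleAverage_congr_sphere fun ζ hζ => ?_).trans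
      (circleAverage_poissonKernel_zero hb)
    have hζ : ‖ζ‖ = 1 := by simpa using hζ
    rw [abs_of_neg (poissonKernel_zero_neg (by rwa [hζ])), poissonKernel_zero_inv_conj hζ ha0]

theorem continuousOn_abs_poissonKernel_zero {a : ℂ} (ha : ‖a‖ ≠ 1) :
    ContinuousOn (fun ζ => |poissonKernel 0 a ζ|) (sphere 0 1) := by
  simp only [poissonKernel, sub_zero]
  refine ContinuousOn.abs (ContinuousOn.div (by fun_prop) (by fun_prop) fun ζ hζ h0 => ha ?_)
  have : ζ = a := by simpa [sub_eq_zero] using h0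
  simpa [this] using hζ

theorem two_mul_re_mul_sum_inv_sub (s : Multiset ℂ) {ζ : ℂ} (hs : ∀ r ∈ s, ζ ≠ r) :
    2 * (ζ * (s.map fun r => 1 / (ζ - r)).sum).re =
      Multiset.card s + (s.map (poissonKernel 0 · ζ)).sum := by
  have hre := map_multiset_sum reAddGroupHom (s.map fun r => ζ * (1 / (ζ - r)))
  simp only [coe_reAddGroupHom, Multiset.map_map] at hre
  rw [← Multiset.sum_map_mul_left, hre, ← Multiset.sum_map_mul_left, Multiset.map_congr rfl
    (fun r hr => by rw [Function.comp_apply, one_div, two_mul_re_mul_inv_sub (hs r hr)]),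
    Multiset.sum_map_add]
  simp

theorem two_mul_re_mul_derivative_div {H : ℂ[X]} {ζ : ℂ} (hH : H.eval ζ ≠ 0) :
    2 * (ζ * (H.derivative.eval ζ / H.eval ζ)).re =
      H.natDegree + (H.roots.map (poissonKernel 0 · ζ)).sum := by
  have hs : ∀ r ∈ H.roots, ζ ≠ r := fun r hr h => by
    rw [h, (mem_roots'.mp hr).2] at hH; exact hH rfl
  rw [(IsAlgClosed.splits H).eval_derivative_div_eval_of_ne_zero hH,
    two_mul_re_mul_sum_inv_sub _ hs, splits_iff_card_roots.mp (IsAlgClosed.splits H)]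

theorem natDegree_lt_two_mul_re_mul_derivative_div {H : ℂ[X]} {ζ : ℂ} (hζ : ‖ζ‖ = 1)
    (hd : 0 < H.natDegree) (hroots : ∀ r ∈ H.roots, ‖r‖ < 1) :
    (H.natDegree : ℝ) < 2 * (ζ * (H.derivative.eval ζ / H.eval ζ)).re := by
  have hH : H.eval ζ ≠ 0 := fun h0 => by
    have := hroots ζ ((mem_roots (ne_zero_of_natDegree_gt hd)).mpr h0)
    linarith
  have hne : H.roots ≠ 0 := by
    intro h0
    have := splits_iff_card_roots.mp (IsAlgClosed.splits H)
    rw [h0, Multiset.card_zero] at this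
    omega
  rw [two_mul_re_mul_derivative_div hH, lt_add_iff_pos_right]
  simpa using Multiset.sum_lt_sum_of_nonempty (f := fun _ => (0 : ℝ)) hne
    fun r hr => poissonKernel_zero_pos ((hroots r hr).trans_eq hζ.symm)

theorem two_mul_re_mul_derivative_div_lt {H : ℂ[X]} {ζ : ℂ} {d : ℕ} (hζ : ‖ζ‖ = 1) (hH : H ≠ 0)
    (hd : 0 < d) (hdeg : H.natDegree ≤ d) (hroots : ∀ r ∈ H.roots, 1 < ‖r‖) :
    2 * (ζ * (H.derivative.eval ζ / H.eval ζ)).re < d := by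
  have hHζ : H.eval ζ ≠ 0 := fun h0 => by
    have := hroots ζ ((mem_roots hH).mpr h0)
    linarith
  rw [two_mul_re_mul_derivative_div hHζ]
  have hcard := splits_iff_card_roots.mp (IsAlgClosed.splits H)
  rcases eq_or_ne H.roots 0 with h0 | hne
  · rw [h0, Multiset.card_zero] at hcard
    simp [h0, ← hcard, hd]
  · have := Multiset.sum_lt_sum_of_nonempty (g := fun _ => (0 : ℝ)) hne
      fun r hr => poissonKernel_zero_neg (hζ.trans_lt (hroots r hr))
    simp only [Multiset.map_const', Multiset.sum_replicate, smul_zero] at this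
    have : (H.natDegree : ℝ) ≤ d := by exact_mod_cast hdeg
    linarith

theorem norm_le_norm_of_forall_sub_mul_ne_zero {𝕜 : Type*} [NormedField 𝕜] {a b : 𝕜}
    (h : ∀ t : 𝕜, ‖t‖ < 1 → b - t * a ≠ 0) : ‖a‖ ≤ ‖b‖ := by
  by_contra! hlt
  have ha : a ≠ 0 := norm_pos_iff.mp ((norm_nonneg b).trans_lt hlt)
  refine h (b / a) ?_ (by field_simp; ring)
  rwa [norm_div, div_lt_one (norm_pos_iff.mpr ha)]

theorem sub_mul_ne_zero_of_norm_le {𝕜 : Type*} [NormedField 𝕜] {g p t : 𝕜} (ht : ‖t‖ < 1)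
    (hg : g ≠ 0) (h : ‖p‖ ≤ ‖g‖) :
    g - t * p ≠ 0 := by
  rw [sub_ne_zero]
  intro heq
  have hg' : 0 < ‖g‖ := norm_pos_iff.mpr hg
  have : ‖g‖ ≤ ‖t‖ * ‖g‖ := by
    calc ‖g‖ = ‖t‖ * ‖p‖ := by rw [heq, norm_mul]
      _ ≤ ‖t‖ * ‖g‖ := by gcongr
  nlinarith

theorem eval_wronskian_eq {K : Type*} [Field K] {Q H : K[X]} {x : K} (hQ : Q.eval x ≠ 0)
    (hH : H.eval x ≠ 0) :
    (wronskian Q H).eval x = Q.eval x * H.eval x *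
      (H.derivative.eval x / H.eval x - Q.derivative.eval x / Q.eval x) := by
  simp only [wronskian, eval_sub, eval_mul]
  field_simp

theorem eval_wronskian_ne_zero {K : Type*} [Field K] {Q H : K[X]} {x : K} (hQ : Q.eval x ≠ 0)
    (hH : H.eval x ≠ 0)
    (h : H.derivative.eval x / H.eval x ≠ Q.derivative.eval x / Q.eval x) :
    (wronskian Q H).eval x ≠ 0 := by
  rw [eval_wronskian_eq hQ hH]
  exact mul_ne_zero (mul_ne_zero hQ hH) (sub_ne_zero.mpr h)

theorem norm_eval_wronskian_le {𝕜 : Type*} [NormedField 𝕜] {Q P G : 𝕜[X]} {x : 𝕜}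
    (h : ∀ t : 𝕜, ‖t‖ < 1 → (wronskian Q (G - C t * P)).eval x ≠ 0) :
    ‖(wronskian Q P).eval x‖ ≤ ‖(wronskian Q G).eval x‖ := by
  refine norm_le_norm_of_forall_sub_mul_ne_zero fun t ht => ?_
  have hlin : wronskian Q (G - C t * P) = wronskian Q G - C t * wronskian Q P := by
    simp only [wronskian, derivative_sub, derivative_C_mul]; ring
  simpa [hlin] using h t ht

theorem norm_le_norm_of_norm_le_one {f g : ℂ → ℂ} (hf : Differentiable ℂ f)
    (hg : Differentiable ℂ g) (hg0 : ∀ u, ‖u‖ ≤ 1 → g u ≠ 0)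
    (h : ∀ u, ‖u‖ = 1 → ‖f u‖ ≤ ‖g u‖) {u : ℂ} (hu : ‖u‖ ≤ 1) : ‖f u‖ ≤ ‖g u‖ := by
  have hcl : closure (ball (0 : ℂ) 1) = closedBall 0 1 := closure_ball 0 one_ne_zero
  have hd : DiffContOnCl ℂ (fun v => f v / g v) (ball 0 1) := by
    refine DifferentiableOn.diffContOnCl ?_
    rw [hcl]
    exact hf.differentiableOn.div hg.differentiableOn fun v hv => hg0 v (by simpa using hv)
  have hle : ‖f u / g u‖ ≤ 1 := by
    refine Complex.norm_le_of_forall_mem_frontier_norm_le isBounded_ball hd (fun v hv => ?_)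
      (by rw [hcl]; simpa using hu)
    rw [frontier_ball 0 one_ne_zero, mem_sphere_zero_iff_norm] at hv
    rw [norm_div, div_le_one (norm_pos_iff.mpr (hg0 v hv.le))]
    exact h v hv
  rwa [norm_div, div_le_one (norm_pos_iff.mpr (hg0 u hu))] at hle

theorem eval_reflect_eq {K : Type*} [Field K] {N : ℕ} {f : K[X]} (hf : f.natDegree ≤ N) {u : K}
    (hu : u ≠ 0) : (reflect N f).eval u = u ^ N * f.eval u⁻¹ := by
  let _ : Invertible u⁻¹ := invertibleOfNonzero (inv_ne_zero hu)
  have := eval₂_reflect_mul_pow (RingHom.id K) u⁻¹ N f hf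
  rw [invOf_eq_inv, inv_inv] at this
  rw [eval, eval, ← this, inv_pow, mul_comm, inv_mul_cancel_right₀ (pow_ne_zero _ hu)]

theorem eval_reflect_zero {K : Type*} [Field K] (N : ℕ) (f : K[X]) :
    (reflect N f).eval 0 = f.coeff N := by
  rw [← coeff_zero_eq_eval_zero, coeff_reflect, revAt_zero]

theorem norm_eval_reflect_le {P G : ℂ[X]} (hP : P.natDegree ≤ G.natDegree)
    (hG : ∀ u, 1 ≤ ‖u‖ → G.eval u ≠ 0) (h : ∀ u, ‖u‖ = 1 → ‖P.eval u‖ ≤ ‖G.eval u‖) {u : ℂ}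
    (hu : ‖u‖ ≤ 1) :
    ‖(reflect G.natDegree P).eval u‖ ≤ ‖(reflect G.natDegree G).eval u‖ := by
  refine norm_le_norm_of_norm_le_one (Polynomial.differentiable _) (Polynomial.differentiable _)
    (fun v hv => ?_) (fun v hv => ?_) hu
  · rcases eq_or_ne v 0 with rfl | hv0
    · have hG0 : G ≠ 0 := by rintro rfl; exact hG 1 (by simp) (eval_zero)
      rw [eval_reflect_zero]
      exact leadingCoeff_ne_zero.mpr hG0
    · rw [eval_reflect_eq le_rfl hv0]
      refine mul_ne_zero (pow_ne_zero _ hv0) (hG _ ?_)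
      rw [norm_inv]; exact one_le_inv₀ (norm_pos_iff.mpr hv0) |>.mpr hv
  · have hv0 : v ≠ 0 := by rintro rfl; simp at hv
    rw [eval_reflect_eq hP hv0, eval_reflect_eq le_rfl hv0, norm_mul, norm_mul]
    gcongr
    exact h _ (by rw [norm_inv, hv, inv_one])

theorem norm_eval_le_of_one_le_norm {P G : ℂ[X]} (hP : P.natDegree ≤ G.natDegree)
    (hG : ∀ u, 1 ≤ ‖u‖ → G.eval u ≠ 0) (h : ∀ u, ‖u‖ = 1 → ‖P.eval u‖ ≤ ‖G.eval u‖) {u : ℂ}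
    (hu : 1 ≤ ‖u‖) : ‖P.eval u‖ ≤ ‖G.eval u‖ := by
  have hu0 : u ≠ 0 := by rintro rfl; simp at hu; linarith
  have := norm_eval_reflect_le hP hG h (u := u⁻¹) (by rw [norm_inv]; exact inv_le_one_of_one_le₀ hu)
  rwa [eval_reflect_eq hP (inv_ne_zero hu0), eval_reflect_eq le_rfl (inv_ne_zero hu0), inv_inv,
    norm_mul, norm_mul, mul_le_mul_iff_right₀ (by simp [hu0])] at this

theorem norm_coeff_natDegree_le {P G : ℂ[X]} (hP : P.natDegree ≤ G.natDegree)
    (hG : ∀ u, 1 ≤ ‖u‖ → G.eval u ≠ 0) (h : ∀ u, ‖u‖ = 1 → ‖P.eval u‖ ≤ ‖G.eval u‖) :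
    ‖P.coeff G.natDegree‖ ≤ ‖G.leadingCoeff‖ := by
  have := norm_eval_reflect_le hP hG h (u := 0) (by simp)
  rwa [eval_reflect_zero, eval_reflect_zero] at this

theorem norm_eval_wronskian_le_of_eval_ne_zero_of_one_le_norm {Q P G : ℂ[X]} {ζ : ℂ}
    (hζ : ‖ζ‖ = 1) (hQ : Q.eval ζ ≠ 0) (hd : 0 < G.natDegree) (hP : P.natDegree ≤ G.natDegree)
    (hG : ∀ u, 1 ≤ ‖u‖ → G.eval u ≠ 0) (hPG : ∀ u, ‖u‖ = 1 → ‖P.eval u‖ ≤ ‖G.eval u‖)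
    (hQre : 2 * (ζ * (Q.derivative.eval ζ / Q.eval ζ)).re ≤ G.natDegree) :
    ‖(wronskian Q P).eval ζ‖ ≤ ‖(wronskian Q G).eval ζ‖ := by
  refine norm_eval_wronskian_le fun t ht => ?_
  set H := G - C t * P
  have hH : ∀ u, 1 ≤ ‖u‖ → H.eval u ≠ 0 := fun u hu => by
    simpa [H] using
      sub_mul_ne_zero_of_norm_le ht (hG u hu) (norm_eval_le_of_one_le_norm hP hG hPG hu)
  have hHdeg : H.natDegree = G.natDegree := by
    refine le_antisymm ((natDegree_sub_le_of_le le_rfl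
      ((natDegree_C_mul_le _ _).trans hP)).trans_eq (max_self _)) ?_
    refine le_natDegree_of_ne_zero ?_
    simpa [H] using sub_mul_ne_zero_of_norm_le ht
      (leadingCoeff_ne_zero.mpr (ne_zero_of_natDegree_gt hd)) (norm_coeff_natDegree_le hP hG hPG)
  have hroots : ∀ r ∈ H.roots, ‖r‖ < 1 := fun r hr => by
    by_contra! h
    exact hH r h (mem_roots'.mp hr).2
  have hlt := natDegree_lt_two_mul_re_mul_derivative_div hζ (hHdeg ▸ hd) hroots
  refine eval_wronskian_ne_zero hQ (hH ζ hζ.ge) fun heq => ?_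
  rw [heq, hHdeg] at hlt
  linarith

theorem norm_eval_wronskian_le_of_eval_ne_zero_of_norm_le_one {Q P G : ℂ[X]} {ζ : ℂ} {d : ℕ}
    (hζ : ‖ζ‖ = 1) (hQ : Q.eval ζ ≠ 0) (hd : 0 < d) (hP : P.natDegree ≤ d)
    (hGd : G.natDegree ≤ d) (hG : ∀ u, ‖u‖ ≤ 1 → G.eval u ≠ 0)
    (hPG : ∀ u, ‖u‖ = 1 → ‖P.eval u‖ ≤ ‖G.eval u‖)
    (hQre : d ≤ 2 * (ζ * (Q.derivative.eval ζ / Q.eval ζ)).re) :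
    ‖(wronskian Q P).eval ζ‖ ≤ ‖(wronskian Q G).eval ζ‖ := by
  refine norm_eval_wronskian_le fun t ht => ?_
  set H := G - C t * P
  have hH : ∀ u, ‖u‖ ≤ 1 → H.eval u ≠ 0 := fun u hu => by
    simpa [H] using sub_mul_ne_zero_of_norm_le ht (hG u hu) (norm_le_norm_of_norm_le_one
      (Polynomial.differentiable P) (Polynomial.differentiable G) hG hPG hu)
  have hH0 : H ≠ 0 := fun h0 => hH 0 (by simp) (by rw [h0, eval_zero])
  have hroots : ∀ r ∈ H.roots, 1 < ‖r‖ := fun r hr => by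
    by_contra! h
    exact hH r h (mem_roots'.mp hr).2
  have hlt := two_mul_re_mul_derivative_div_lt hζ hH0 hd
    ((natDegree_sub_le_of_le hGd ((natDegree_C_mul_le _ _).trans hP)).trans_eq (max_self _)) hroots
  refine eval_wronskian_ne_zero hQ (hH ζ hζ.le) fun heq => ?_
  rw [heq] at hlt
  linarith

theorem eval_derivative_mul_div {K : Type*} [Field K] {p q : K[X]} {x : K} (hp : p.eval x ≠ 0)
    (hq : q.eval x ≠ 0) :
    (p * q).derivative.eval x / (p * q).eval x =
      p.derivative.eval x / p.eval x + q.derivative.eval x / q.eval x := by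
  simp only [derivative_mul, eval_add, eval_mul]
  field_simp

theorem eval_derivative_prod_div {K ι : Type*} [Field K] (s : Finset ι) {g : ι → K[X]} {x : K}
    (hg : ∀ j ∈ s, (g j).eval x ≠ 0) :
    (∏ j ∈ s, g j).derivative.eval x / (∏ j ∈ s, g j).eval x =
      ∑ j ∈ s, (g j).derivative.eval x / (g j).eval x := by
  classical
  induction s using Finset.induction_on with
  | empty => simp
  | insert i s hi ih =>
    have hs : ∀ j ∈ s, (g j).eval x ≠ 0 := fun j hj => hg j (Finset.mem_insert_of_mem hj)
    rw [Finset.prod_insert hi, Finset.sum_insert hi, eval_derivative_mul_div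
      (hg i (Finset.mem_insert_self i s)) (by rw [eval_prod]; exact Finset.prod_ne_zero_iff.mpr hs),
      ih hs]

theorem mul_sub_div_one_sub_conj_mul {ζ a : ℂ} (hζ : ‖ζ‖ = 1) (h : ζ ≠ a) :
    ζ * (-conj a / (1 - conj a * ζ) - 1 / (ζ - a)) = -(poissonKernel 0 a ζ : ℂ) := by
  have hu : ζ * conj ζ = 1 := by rw [mul_conj, normSq_eq_norm_sq, hζ]; simp
  have hsub : ζ - a ≠ 0 := sub_ne_zero.mpr h
  have hc : conj (ζ - a) ≠ 0 := (_root_.map_ne_zero _).mpr hsub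
  have hζ0 : ζ ≠ 0 := by rintro rfl; simp at hζ
  have h2 : ((‖ζ - a‖ ^ 2 : ℝ) : ℂ) = (ζ - a) * conj (ζ - a) := by
    rw [mul_conj, normSq_eq_norm_sq]
  have h3 : ((‖a‖ ^ 2 : ℝ) : ℂ) = a * conj a := by rw [mul_conj, normSq_eq_norm_sq]
  rw [one_sub_conj_mul_eq hζ, poissonKernel_zero_of_norm_eq_one hζ, ofReal_div, ofReal_sub,
    ofReal_one, h2, h3]
  field_simp
  rw [map_sub]
  linear_combination (-1 : ℂ) * hu

section FlipNodal

variable {ι : Type*} [Fintype ι] (p : ι → Prop) [DecidablePred p] (z : ι → ℂ)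

/-- `1 - conj a * X` vanishes at the reflection `1 / conj a` of `a` in the unit circle and has the
modulus of `X - a` on it. -/
noncomputable def flipNodal : ℂ[X] :=
  ∏ j, if p j then 1 - C (conj (z j)) * X else X - C (z j)

theorem eval_flipNodal (x : ℂ) :
    (flipNodal p z).eval x = ∏ j, if p j then 1 - conj (z j) * x else x - z j := by
  simp [flipNodal, eval_prod, apply_ite]

theorem norm_eval_X_pow_mul_flipNodal {u : ℂ} (hu : ‖u‖ = 1) (k : ℕ) :
    ‖(X ^ k * flipNodal p z).eval u‖ = ‖(nodal Finset.univ z).eval u‖ := by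
  rw [eval_mul, norm_mul, eval_pow, eval_X, norm_pow, hu, one_pow, one_mul, eval_flipNodal,
    eval_nodal, norm_prod, norm_prod]
  refine Finset.prod_congr rfl fun j _ => ?_
  split_ifs
  · rw [one_sub_conj_mul_eq hu, norm_mul, hu, one_mul, RCLike.norm_conj]
  · rfl

variable {p z}

theorem eval_flipNodal_ne_zero {x : ℂ} (h₁ : ∀ j, p j → conj (z j) * x ≠ 1)
    (h₂ : ∀ j, ¬p j → x ≠ z j) : (flipNodal p z).eval x ≠ 0 := by
  rw [eval_flipNodal]
  refine Finset.prod_ne_zero_iff.mpr fun j _ => ?_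
  split_ifs with h
  · exact sub_ne_zero.mpr (h₁ j h).symm
  · exact sub_ne_zero.mpr (h₂ j h)

theorem natDegree_flipNodal_le : (flipNodal p z).natDegree ≤ Fintype.card ι := by
  refine (natDegree_prod_le _ _).trans ?_
  refine (Finset.sum_le_card_nsmul _ _ 1 fun j _ => ?_).trans_eq (by simp)
  split_ifs
  · exact (natDegree_sub_le _ _).trans
      (max_le (by simp) ((natDegree_C_mul_le _ _).trans natDegree_X_le))
  · exact (natDegree_X_sub_C _).le

theorem flipNodal_ne_zero : flipNodal p z ≠ 0 := by
  refine Finset.prod_ne_zero_iff.mpr fun j _ => ?_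
  split_ifs
  · intro h
    simpa using congrArg (eval 0) h
  · exact X_sub_C_ne_zero _

theorem natDegree_flipNodal (h : ∀ j, p j → z j ≠ 0) :
    (flipNodal p z).natDegree = Fintype.card ι := by
  have hfac : ∀ j, (if p j then 1 - C (conj (z j)) * X else X - C (z j)).natDegree = 1 := by
    intro j
    split_ifs with hj
    · rw [show (1 : ℂ[X]) - C (conj (z j)) * X = C (-conj (z j)) * X + C 1 by simp; ring]
      exact natDegree_linear (by simpa using h j hj)
    · exact natDegree_X_sub_C _
  rw [flipNodal, natDegree_prod _ _ fun j _ => ne_zero_of_natDegree_gt (hfac j).symm.le]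
  simp [hfac]

theorem natDegree_X_pow_mul_flipNodal (h : ∀ j, p j → z j ≠ 0) (k : ℕ) :
    (X ^ k * flipNodal p z).natDegree = k + Fintype.card ι := by
  rw [natDegree_mul (pow_ne_zero _ X_ne_zero) flipNodal_ne_zero, natDegree_X_pow,
    natDegree_flipNodal h]

theorem eval_X_pow_mul_flipNodal_ne_zero_of_one_le_norm (hz : ∀ j, ‖z j‖ ≠ 1) (k : ℕ) {u : ℂ}
    (hu : 1 ≤ ‖u‖) : (X ^ k * flipNodal (fun j => 1 < ‖z j‖) z).eval u ≠ 0 := by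
  have hu0 : u ≠ 0 := by rintro rfl; simp at hu; linarith
  rw [eval_mul, eval_pow, eval_X]
  refine mul_ne_zero (pow_ne_zero _ hu0)
    (eval_flipNodal_ne_zero (fun j hj h => ?_) fun j hj h => ?_)
  · have : 1 < ‖conj (z j) * u‖ := by
      rw [norm_mul, RCLike.norm_conj]
      exact lt_of_lt_of_le hj (le_mul_of_one_le_right (norm_nonneg _) hu)
    rw [h, norm_one] at this
    exact lt_irrefl _ this
  · have : ‖z j‖ < 1 := lt_of_le_of_ne (not_lt.mp hj) (hz j)
    rw [← h] at this
    linarith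

theorem eval_flipNodal_ne_zero_of_norm_le_one (hz : ∀ j, ‖z j‖ ≠ 1) {u : ℂ} (hu : ‖u‖ ≤ 1) :
    (flipNodal (fun j => ‖z j‖ < 1) z).eval u ≠ 0 := by
  refine eval_flipNodal_ne_zero (fun j hj h => ?_) fun j hj h => ?_
  · have : ‖conj (z j) * u‖ < 1 := by
      rw [norm_mul, RCLike.norm_conj]
      exact lt_of_le_of_lt (mul_le_of_le_one_right (norm_nonneg _) hu) hj
    rw [h, norm_one] at this
    exact lt_irrefl _ this
  · have : 1 < ‖z j‖ := lt_of_le_of_ne (not_lt.mp hj) (hz j).symm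
    rw [← h] at this
    linarith

theorem mul_sub_derivative_div_flipNodal {ζ : ℂ} (hζ : ‖ζ‖ = 1) (hz : ∀ j, ζ ≠ z j) (k : ℕ) :
    ζ * ((X ^ k * flipNodal p z).derivative.eval ζ / (X ^ k * flipNodal p z).eval ζ -
        (nodal Finset.univ z).derivative.eval ζ / (nodal Finset.univ z).eval ζ) =
      k + ∑ j, if p j then -(poissonKernel 0 (z j) ζ : ℂ) else 0 := by
  have hζ0 : ζ ≠ 0 := by rintro rfl; simp at hζ
  have hfac : ∀ j ∈ Finset.univ,
      (if p j then 1 - C (conj (z j)) * X else X - C (z j)).eval ζ ≠ 0 := by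
    intro j _
    split_ifs
    · simpa using one_sub_conj_mul_ne_zero hζ (hz j)
    · simpa [sub_eq_zero] using hz j
  have hflip : (flipNodal p z).eval ζ ≠ 0 := by
    rw [flipNodal, eval_prod]; exact Finset.prod_ne_zero_iff.mpr hfac
  rw [eval_derivative_mul_div (by simpa using pow_ne_zero k hζ0) hflip, flipNodal,
    eval_derivative_prod_div _ hfac, nodal_eq,
    eval_derivative_prod_div _ fun j _ => by simpa [sub_eq_zero] using hz j]
  have hk : ζ * ((k : ℂ) * ζ ^ (k - 1) / ζ ^ k) = k := by
    cases k with
    | zero => simp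
    | succ k => rw [Nat.add_sub_cancel, pow_succ]; field_simp
  simp only [derivative_X_pow, eval_mul, eval_pow, eval_X, eval_C, mul_add, mul_sub, hk,
    add_sub_assoc, Finset.mul_sum, ← Finset.sum_sub_distrib]
  congr 1
  refine Finset.sum_congr rfl fun j _ => ?_
  split_ifs
  · rw [← mul_sub, ← mul_sub_div_one_sub_conj_mul hζ (hz j)]
    simp
  · simp
end FlipNodal

section Nodal

variable {ι : Type*} [Fintype ι] {z : ι → ℂ}

theorem norm_eval_wronskian_flipNodal_le (p : ι → Prop) [DecidablePred p] {ζ : ℂ}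
    (hζ : ‖ζ‖ = 1) (hz : ∀ j, ζ ≠ z j) (k : ℕ) :
    ‖(wronskian (nodal Finset.univ z) (X ^ k * flipNodal p z)).eval ζ‖ ≤
      (k + ∑ j, |poissonKernel 0 (z j) ζ|) * ‖(nodal Finset.univ z).eval ζ‖ ^ 2 := by
  have hζ0 : ζ ≠ 0 := by rintro rfl; simp at hζ
  have hQ : (nodal Finset.univ z).eval ζ ≠ 0 := by
    rw [eval_nodal]; exact Finset.prod_ne_zero_iff.mpr fun j _ => sub_ne_zero.mpr (hz j)
  have hG : (X ^ k * flipNodal p z).eval ζ ≠ 0 := by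
    rw [eval_mul, eval_pow, eval_X]
    refine mul_ne_zero (pow_ne_zero _ hζ0)
      (eval_flipNodal_ne_zero (fun j _ h => ?_) fun j _ => hz j)
    exact one_sub_conj_mul_ne_zero hζ (hz j) (by rw [h, sub_self])
  calc ‖(wronskian (nodal Finset.univ z) (X ^ k * flipNodal p z)).eval ζ‖
      = ‖(nodal Finset.univ z).eval ζ‖ ^ 2 * ‖ζ * ((X ^ k * flipNodal p z).derivative.eval ζ /
          (X ^ k * flipNodal p z).eval ζ - (nodal Finset.univ z).derivative.eval ζ /
          (nodal Finset.univ z).eval ζ)‖ := by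
        rw [eval_wronskian_eq hQ hG, norm_mul, norm_mul, norm_mul,
          norm_eval_X_pow_mul_flipNodal p z hζ, hζ]; ring
    _ ≤ ‖(nodal Finset.univ z).eval ζ‖ ^ 2 * (k + ∑ j, |poissonKernel 0 (z j) ζ|) := by
        rw [mul_sub_derivative_div_flipNodal hζ hz k]
        gcongr
        refine (norm_add_le _ _).trans (add_le_add (by simp) ((norm_sum_le _ _).trans ?_))
        gcongr with j
        split_ifs <;> simp
    _ = _ := mul_comm _ _

theorem two_mul_re_mul_derivative_div_nodal {ζ : ℂ} (hz : ∀ j, ζ ≠ z j) :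
    2 * (ζ * ((nodal Finset.univ z).derivative.eval ζ / (nodal Finset.univ z).eval ζ)).re =
      Fintype.card ι + ∑ j, poissonKernel 0 (z j) ζ := by
  rw [nodal_eq, eval_derivative_prod_div _ fun j _ => by simpa [sub_eq_zero] using hz j,
    Finset.mul_sum, re_sum, Finset.mul_sum]
  simp only [derivative_sub, derivative_X, derivative_C, sub_zero, eval_one, eval_sub, eval_X,
    eval_C, one_div, two_mul_re_mul_inv_sub (hz _), Finset.sum_add_distrib]
  simp

end Nodal

theorem norm_eval_wronskian_nodal_le {ι : Type*} [Fintype ι] {z : ι → ℂ} (hz : ∀ j, ‖z j‖ ≠ 1)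
    {n : ℕ} {P : ℂ[X]} (hP : P.natDegree ≤ n)
    (hPQ : ∀ u, ‖u‖ = 1 → ‖P.eval u‖ ≤ ‖(nodal Finset.univ z).eval u‖) {ζ : ℂ} (hζ : ‖ζ‖ = 1) :
    ‖(wronskian (nodal Finset.univ z) P).eval ζ‖ ≤
      ((n - Fintype.card ι : ℕ) + ∑ j, |poissonKernel 0 (z j) ζ|) *
        ‖(nodal Finset.univ z).eval ζ‖ ^ 2 := by
  set k := n - Fintype.card ι
  set d := k + Fintype.card ι
  have hzζ : ∀ j, ζ ≠ z j := fun j h => hz j (h ▸ hζ)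
  have hQ : (nodal Finset.univ z).eval ζ ≠ 0 := by
    rw [eval_nodal]; exact Finset.prod_ne_zero_iff.mpr fun j _ => sub_ne_zero.mpr (hzζ j)
  have hQre := two_mul_re_mul_derivative_div_nodal hzζ
  have hPd : P.natDegree ≤ d := hP.trans (by omega)
  rcases Nat.eq_zero_or_pos d with hd | hd
  · have hι : IsEmpty ι := Fintype.card_eq_zero_iff.mp (by omega)
    simp [nodal, wronskian, derivative_of_natDegree_zero (Nat.le_zero.mp (hd ▸ hPd))]
  by_cases hS : ∑ j, poissonKernel 0 (z j) ζ ≤ k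
  · have hMdeg := natDegree_X_pow_mul_flipNodal (p := fun j => 1 < ‖z j‖) (z := z)
      (fun j hj h0 => by simp [h0] at hj; linarith) k
    refine (norm_eval_wronskian_le_of_eval_ne_zero_of_one_le_norm hζ hQ (hMdeg ▸ hd)
      (hMdeg ▸ hPd) (fun u => eval_X_pow_mul_flipNodal_ne_zero_of_one_le_norm hz k)
      (fun u hu => (hPQ u hu).trans_eq (norm_eval_X_pow_mul_flipNodal _ z hu k).symm)
      (by rw [hQre, hMdeg]; push_cast [d]; linarith)).trans
      (norm_eval_wronskian_flipNodal_le _ hζ hzζ k)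
  · refine (norm_eval_wronskian_le_of_eval_ne_zero_of_norm_le_one (d := d)
      (G := X ^ 0 * flipNodal (fun j => ‖z j‖ < 1) z) hζ hQ hd hPd
      (by simpa using natDegree_flipNodal_le.trans (Nat.le_add_left _ k))
      (fun u hu => by simpa using eval_flipNodal_ne_zero_of_norm_le_one hz hu)
      (fun u hu => (hPQ u hu).trans_eq (norm_eval_X_pow_mul_flipNodal _ z hu 0).symm)
      (by rw [hQre]; push_cast [d]; linarith)).trans
      ((norm_eval_wronskian_flipNodal_le _ hζ hzζ 0).trans ?_)
    gcongr
    simp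

theorem deriv_eval_div_eval {Q P : ℂ[X]} {ζ : ℂ} (hQ : Q.eval ζ ≠ 0) :
    deriv (fun w => P.eval w / Q.eval w) ζ = (wronskian Q P).eval ζ / Q.eval ζ ^ 2 := by
  rw [((P.hasDerivAt ζ).fun_div (Q.hasDerivAt ζ) hQ).deriv]
  simp only [wronskian, eval_sub, eval_mul]
  ring

theorem norm_deriv_le_of_eval_nodal_mul_eq {ι : Type*} [Fintype ι] {z : ι → ℂ}
    (hz : ∀ j, ‖z j‖ ≠ 1) {n : ℕ} {P : ℂ[X]} (hP : P.natDegree ≤ n) {f : ℂ → ℂ}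
    (hf : ∀ w, w ∉ Set.range z → (nodal Finset.univ z).eval w * f w = P.eval w)
    (hf1 : ∀ w, ‖w‖ = 1 → ‖f w‖ ≤ 1) {ζ : ℂ} (hζ : ‖ζ‖ = 1) :
    ‖deriv f ζ‖ ≤ (n - Fintype.card ι : ℕ) + ∑ j, |poissonKernel 0 (z j) ζ| := by
  have hQ : ∀ w, w ∉ Set.range z → (nodal Finset.univ z).eval w ≠ 0 := fun w hw => by
    rw [eval_nodal]
    exact Finset.prod_ne_zero_iff.mpr fun j _ => sub_ne_zero.mpr fun h => hw ⟨j, h.symm⟩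
  have hcirc : ∀ w : ℂ, ‖w‖ = 1 → w ∉ Set.range z := fun w hw ⟨j, hj⟩ => hz j (hj ▸ hw)
  have hfQ : f =ᶠ[nhds ζ] fun w => P.eval w / (nodal Finset.univ z).eval w := by
    filter_upwards [(Set.finite_range z).isClosed.isOpen_compl.mem_nhds (hcirc ζ hζ)] with w hw
    rw [eq_div_iff (hQ w hw), mul_comm, hf w hw]
  have hPQ : ∀ u, ‖u‖ = 1 → ‖P.eval u‖ ≤ ‖(nodal Finset.univ z).eval u‖ := fun u hu => by
    rw [← hf u (hcirc u hu), norm_mul]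
    exact mul_le_of_le_one_right (norm_nonneg _) (hf1 u hu)
  have hQζ := norm_pos_iff.mpr (hQ ζ (hcirc ζ hζ))
  rw [hfQ.deriv_eq, deriv_eval_div_eval (hQ ζ (hcirc ζ hζ)), norm_div, norm_pow,
    div_le_iff₀ (by positivity)]
  exact norm_eval_wronskian_nodal_le hz hP hPQ hζ

theorem norm_deriv_le_of_prod_smul_eq {V : Type*} [NormedAddCommGroup V] [NormedSpace ℂ V]
    {ι : Type*} [Fintype ι] {z : ι → ℂ} (hz : ∀ j, ‖z j‖ ≠ 1) {n : ℕ} {A : ℂ → V} {c : ℕ → V}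
    (hA : ∀ w, w ∉ Set.range z →
      (∏ j, (w - z j)) • A w = ∑ k ∈ Finset.range (n + 1), w ^ k • c k)
    (hA1 : ∀ w, ‖w‖ = 1 → ‖A w‖ ≤ 1) {ζ : ℂ} (hζ : ‖ζ‖ = 1) :
    ‖deriv A ζ‖ ≤ (n - Fintype.card ι : ℕ) + ∑ j, |poissonKernel 0 (z j) ζ| := by
  by_cases hd : DifferentiableAt ℂ A ζ
  swap
  · rw [deriv_zero_of_not_differentiableAt hd, norm_zero]; positivity
  obtain ⟨φ, hφ, hφA⟩ := exists_dual_vector'' ℂ (deriv A ζ)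
  have hφA' : deriv (φ ∘ A) ζ = ‖deriv A ζ‖ :=
    (φ.hasFDerivAt.comp_hasDerivAt ζ hd.hasDerivAt).deriv.trans hφA
  have := norm_deriv_le_of_eval_nodal_mul_eq hz (f := φ ∘ A)
    (P := ∑ k ∈ Finset.range (n + 1), C (φ (c k)) * X ^ k)
    (natDegree_sum_le_of_forall_le _ _ fun k hk =>
      natDegree_C_mul_X_pow_le _ _ |>.trans (Nat.lt_succ_iff.mp (Finset.mem_range.mp hk)))
    (fun w hw => by
      rw [eval_nodal, Function.comp_apply, ← smul_eq_mul, ← map_smul, hA w hw, map_sum,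
        eval_finsetSum]
      refine Finset.sum_congr rfl fun k _ => ?_
      rw [map_smul, smul_eq_mul, eval_mul, eval_C, eval_pow, eval_X, mul_comm])
    (fun w hw => (φ.le_of_opNorm_le hφ _).trans (by simpa using hA1 w hw)) hζ
  rwa [hφA', norm_real, norm_norm] at this

theorem continuousOn_sum_abs_poissonKernel_zero {ι : Type*} [Fintype ι] {z : ι → ℂ}
    (hz : ∀ j, ‖z j‖ ≠ 1) :
    ContinuousOn (fun ζ => ∑ j, |poissonKernel 0 (z j) ζ|) (sphere 0 1) :=
  continuousOn_finsetSum _ fun j _ => continuousOn_abs_poissonKernel_zero (hz j)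

theorem circleAverage_add_sum_abs_poissonKernel_zero {ι : Type*} [Fintype ι] {z : ι → ℂ}
    (hz : ∀ j, ‖z j‖ ≠ 1) (k : ℝ) :
    Real.circleAverage (fun ζ => k + ∑ j, |poissonKernel 0 (z j) ζ|) 0 1 = k + Fintype.card ι := by
  have hint : ∀ j ∈ Finset.univ, CircleIntegrable (fun ζ => |poissonKernel 0 (z j) ζ|) 0 1 :=
    fun j _ => (continuousOn_abs_poissonKernel_zero (hz j)).circleIntegrable zero_le_one
  rw [Real.circleAverage_fun_add (circleIntegrable_const _ _ _)
      ((continuousOn_sum_abs_poissonKernel_zero hz).circleIntegrable zero_le_one),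
    Real.circleAverage_const, Real.circleAverage_fun_sum hint]
  simp [circleAverage_abs_poissonKernel_zero (hz _)]

/-- Let `V` be a complex normed space, `z_1, …, z_m ∈ ℂ` with `|z_j| ≠ 1`, and
`A : ℂ ∖ {z_1, …, z_m} → V` such that `(z − z_1)⋯(z − z_m)·A(z)` agrees there with a
`V`-valued polynomial of degree at most `n`, and `‖A(z)‖ ≤ 1` on the unit circle. Then
`∫_{S¹} ‖A′(z)‖ |dz| = ∫_0^{2π} ‖A′(e^{iθ})‖ dθ ≤ 2π · max(m, n)`. -/
theorem stmt_7 (V : Type*) [NormedAddCommGroup V] [NormedSpace ℂ V]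
    (m n : ℕ) (z : Fin m → ℂ) (hz : ∀ j, ‖z j‖ ≠ 1)
    (A : ℂ → V) (c : ℕ → V)
    (hA : ∀ w : ℂ, w ∉ Set.range z →
      (∏ j, (w - z j)) • A w = ∑ k ∈ Finset.range (n + 1), w ^ k • c k)
    (hA1 : ∀ w : ℂ, ‖w‖ = 1 → ‖A w‖ ≤ 1) :
    ∫ θ in (0 : ℝ)..(2 * π), ‖deriv A (Complex.exp (θ * Complex.I))‖ ≤
      2 * π * (max m n : ℕ) := by
  set b : ℂ → ℝ := fun ζ => ((n - m : ℕ) : ℝ) + ∑ j, |poissonKernel 0 (z j) ζ|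
  have hb : CircleIntegrable b 0 1 :=
    (continuousOn_const.add (continuousOn_sum_abs_poissonKernel_zero hz)).circleIntegrable
      zero_le_one
  have hpt : ∀ θ : ℝ, ‖deriv A (Complex.exp (θ * Complex.I))‖ ≤ b (circleMap 0 1 θ) := fun θ => by
    simpa [b, circleMap] using norm_deriv_le_of_prod_smul_eq hz hA hA1 (norm_exp_ofReal_mul_I θ)
  calc ∫ θ in (0 : ℝ)..(2 * π), ‖deriv A (Complex.exp (θ * Complex.I))‖
      ≤ ∫ θ in (0 : ℝ)..(2 * π), b (circleMap 0 1 θ) := by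
        rw [intervalIntegral.integral_of_le Real.two_pi_pos.le,
          intervalIntegral.integral_of_le Real.two_pi_pos.le]
        exact MeasureTheory.integral_mono_of_nonneg (.of_forall fun θ => norm_nonneg _) hb.1
          (.of_forall hpt)
    _ = 2 * π * Real.circleAverage b 0 1 := by
        rw [Real.circleAverage_def, smul_eq_mul]; field_simp
    _ = 2 * π * (max m n : ℕ) := by
        rw [circleAverage_add_sum_abs_poissonKernel_zero hz, Fintype.card_fin]
        norm_cast
        rw [Nat.sub_add_eq_max, max_comm]
end

section
/- Let X be a measurable space, let f : X → ℝ be a measurable function, and let M be a set of measures on X. Then the following are equivalent: (i) there exist constants C > 0 and N > 0 such that μ({x ∈ X : |f(x)| ≤ R}) ≤ C·(1 + R)^N for every μ ∈ M and every R ≥ 0; (ii) there exist a natural number k and a constant B < ∞ such that ∫_X (1 + |f(x)|)^{-k} dμ(x) ≤ B for every μ ∈ M. -/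
open scoped ENNReal
open MeasureTheory

/-- Let `X` be a measurable space, `f : X → ℝ` measurable, and `M` a set of measures on
`X`. The following are equivalent: (i) there are `C > 0`, `N > 0` with
`μ({|f| ≤ R}) ≤ C(1 + R)^N` for all `μ ∈ M`, `R ≥ 0`; (ii) there are `k ∈ ℕ` and
`B < ∞` with `∫ (1 + |f|)^{-k} dμ ≤ B` for all `μ ∈ M`. -/
theorem stmt_12 (X : Type*) [MeasurableSpace X] (f : X → ℝ) (hf : Measurable f)
    (M : Set (Measure X)) :
    (∃ C : ℝ, 0 < C ∧ ∃ N : ℝ, 0 < N ∧ ∀ μ ∈ M, ∀ R : ℝ, 0 ≤ R →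
        μ {x | |f x| ≤ R} ≤ ENNReal.ofReal (C * (1 + R) ^ N)) ↔
    (∃ k : ℕ, ∃ B : ℝ≥0∞, B < ∞ ∧ ∀ μ ∈ M,
        ∫⁻ x, ENNReal.ofReal (1 / (1 + |f x|) ^ k) ∂μ ≤ B) := by
  constructor
  · rintro ⟨C, hC, N, hN, h⟩
    set k : ℕ := ⌈N⌉₊ + 1 with hk
    have hNk : N - (k : ℝ) < 0 := by
      have := Nat.le_ceil N
      have : N ≤ (⌈N⌉₊ : ℝ) := this
      push_cast [hk]
      linarith
    set r : ℝ := (2 : ℝ) ^ (N - (k : ℝ)) with hr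
    have hr0 : 0 ≤ r := Real.rpow_nonneg (by norm_num) _
    have hr1 : r < 1 := Real.rpow_lt_one_of_one_lt_of_neg (by norm_num) hNk
    refine ⟨k, ∑' n : ℕ, ENNReal.ofReal (C * 2 ^ N * r ^ n), ?_, ?_⟩
    · have he : ∀ n : ℕ, ENNReal.ofReal (C * 2 ^ N * r ^ n)
          = ENNReal.ofReal (C * 2 ^ N) * (ENNReal.ofReal r) ^ n := by
        intro n
        rw [ENNReal.ofReal_mul (by positivity), ENNReal.ofReal_pow hr0]
      rw [tsum_congr he, ENNReal.tsum_mul_left, ENNReal.tsum_geometric]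
      have h1 : ENNReal.ofReal r < 1 := ENNReal.ofReal_lt_one.mpr hr1
      have hpos : (0 : ℝ≥0∞) < 1 - ENNReal.ofReal r := tsub_pos_of_lt h1
      exact ENNReal.mul_lt_top ENNReal.ofReal_lt_top (ENNReal.inv_lt_top.mpr hpos)
    · intro μ hμ
      have hmeas : ∀ n : ℕ, MeasurableSet {x : X | |f x| ≤ (2 : ℝ) ^ (n + 1) - 1} :=
        fun n => measurableSet_le hf.abs measurable_const
      have hpt : ∀ x, ENNReal.ofReal (1 / (1 + |f x|) ^ k)
          ≤ ∑' n : ℕ, Set.indicator {y : X | |f y| ≤ (2 : ℝ) ^ (n + 1) - 1}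
              (fun _ => ENNReal.ofReal (1 / ((2 : ℝ) ^ n) ^ k)) x := by
        intro x
        have ha : (1 : ℝ) ≤ 1 + |f x| := le_add_of_nonneg_right (abs_nonneg _)
        obtain ⟨n, hn1, hn2⟩ : ∃ n : ℕ, (2 : ℝ) ^ n ≤ 1 + |f x| ∧
            1 + |f x| ≤ (2 : ℝ) ^ (n + 1) := by
          have hex : ∃ n : ℕ, 1 + |f x| ≤ (2 : ℝ) ^ (n + 1) := by
            obtain ⟨n, hn⟩ := pow_unbounded_of_one_lt (1 + |f x|) (by norm_num : (1 : ℝ) < 2)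
            exact ⟨n, le_of_lt (hn.trans_le (pow_le_pow_right₀ (by norm_num) (Nat.le_succ n)))⟩
          refine ⟨Nat.find hex, ?_, Nat.find_spec hex⟩
          rcases Nat.eq_zero_or_pos (Nat.find hex) with h0 | h0
          · rw [h0]; simp only [pow_zero]; exact ha
          · have hmin := Nat.find_min hex (Nat.sub_lt h0 one_pos)
            have heq : Nat.find hex - 1 + 1 = Nat.find hex := Nat.succ_pred_eq_of_pos h0
            rw [heq] at hmin
            exact le_of_not_ge hmin
        refine le_trans ?_ (ENNReal.le_tsum n)
        rw [Set.indicator_of_mem (by simp only [Set.mem_setOf_eq]; linarith)]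
        exact ENNReal.ofReal_le_ofReal (one_div_le_one_div_of_le (by positivity)
          (pow_le_pow_left₀ (by positivity) hn1 k))
      calc ∫⁻ x, ENNReal.ofReal (1 / (1 + |f x|) ^ k) ∂μ
          ≤ ∫⁻ x, ∑' n : ℕ, Set.indicator {y : X | |f y| ≤ (2 : ℝ) ^ (n + 1) - 1}
              (fun _ => ENNReal.ofReal (1 / ((2 : ℝ) ^ n) ^ k)) x ∂μ := lintegral_mono hpt
        _ = ∑' n : ℕ, ∫⁻ x, Set.indicator {y : X | |f y| ≤ (2 : ℝ) ^ (n + 1) - 1}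
              (fun _ => ENNReal.ofReal (1 / ((2 : ℝ) ^ n) ^ k)) x ∂μ :=
            lintegral_tsum fun n => (measurable_const.indicator (hmeas n)).aemeasurable
        _ ≤ ∑' n : ℕ, ENNReal.ofReal (C * 2 ^ N * r ^ n) := ?_
      refine ENNReal.tsum_le_tsum fun n => ?_
      rw [lintegral_indicator_const (hmeas n)]
      have hR : (0 : ℝ) ≤ (2 : ℝ) ^ (n + 1) - 1 := by
        have : (1 : ℝ) ≤ 2 ^ (n + 1) := one_le_pow₀ (by norm_num)
        linarith
      have hh := h μ hμ _ hR
      have h1R : (1 : ℝ) + ((2 : ℝ) ^ (n + 1) - 1) = 2 ^ (n + 1) := by ring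
      rw [h1R] at hh
      calc ENNReal.ofReal (1 / ((2 : ℝ) ^ n) ^ k) * μ {x | |f x| ≤ (2 : ℝ) ^ (n + 1) - 1}
          ≤ ENNReal.ofReal (1 / ((2 : ℝ) ^ n) ^ k)
              * ENNReal.ofReal (C * ((2 : ℝ) ^ (n + 1)) ^ N) := mul_le_mul_right hh _
        _ = ENNReal.ofReal (1 / ((2 : ℝ) ^ n) ^ k * (C * ((2 : ℝ) ^ (n + 1)) ^ N)) :=
            (ENNReal.ofReal_mul (by positivity)).symm
        _ = ENNReal.ofReal (C * 2 ^ N * r ^ n) := by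
            congr 1
            have two_pos : (0 : ℝ) < 2 := by norm_num
            have e1 : ((2 : ℝ) ^ n) ^ k = (2 : ℝ) ^ ((n * k : ℕ) : ℝ) := by
              rw [Real.rpow_natCast, pow_mul]
            have e2 : ((2 : ℝ) ^ (n + 1)) ^ N = (2 : ℝ) ^ (((n : ℝ) + 1) * N) := by
              rw [Real.rpow_mul (by norm_num), ← Real.rpow_natCast 2 (n + 1)]
              push_cast
              ring_nf
            have e3 : r ^ n = (2 : ℝ) ^ ((N - (k : ℝ)) * n) := by
              rw [hr, ← Real.rpow_natCast ((2:ℝ) ^ (N - (k:ℝ))) n, ← Real.rpow_mul (by norm_num)]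
            have hmul : ∀ s t : ℝ, (2 : ℝ) ^ s * (2 : ℝ) ^ t = 2 ^ (s + t) :=
              fun s t => (Real.rpow_add two_pos s t).symm
            rw [e1, e2, e3, one_div, ← Real.rpow_neg (by norm_num)]
            calc (2 : ℝ) ^ (-((n * k : ℕ) : ℝ)) * (C * 2 ^ (((n : ℝ) + 1) * N))
                = C * ((2:ℝ) ^ (-((n * k : ℕ) : ℝ)) * 2 ^ (((n : ℝ) + 1) * N)) := by ring
              _ = C * 2 ^ (-((n * k : ℕ) : ℝ) + ((n : ℝ) + 1) * N) := by rw [hmul]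
              _ = C * 2 ^ (N + (N - (k : ℝ)) * (n : ℝ)) := by
                  congr 1
                  push_cast
                  ring
              _ = C * (2 ^ N * 2 ^ ((N - (k : ℝ)) * (n : ℝ))) := by rw [hmul]
              _ = C * 2 ^ N * 2 ^ ((N - (k : ℝ)) * (n : ℝ)) := by ring
  · rintro ⟨k, B, hB, h⟩
    refine ⟨B.toReal + 1, by positivity, (k : ℝ) + 1, by positivity, ?_⟩
    intro μ hμ R hR
    have h1R : (0 : ℝ) < 1 + R := by linarith
    have hmg : AEMeasurable (fun x => ENNReal.ofReal (1 / (1 + |f x|) ^ k)) μ :=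
      ((measurable_const.div ((measurable_const.add hf.abs).pow_const k)).ennreal_ofReal).aemeasurable
    set ε : ℝ≥0∞ := ENNReal.ofReal (1 / (1 + R) ^ k) with hε
    have hsub : {x | |f x| ≤ R} ⊆ {x | ε ≤ ENNReal.ofReal (1 / (1 + |f x|) ^ k)} := by
      intro x hx
      simp only [Set.mem_setOf_eq] at hx ⊢
      apply ENNReal.ofReal_le_ofReal
      apply one_div_le_one_div_of_le (by positivity)
      exact pow_le_pow_left₀ (by positivity) (by linarith) k
    have key : μ {x | |f x| ≤ R} * ε ≤ B := by
      rw [mul_comm]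
      calc ε * μ {x | |f x| ≤ R}
          ≤ ε * μ {x | ε ≤ ENNReal.ofReal (1 / (1 + |f x|) ^ k)} :=
            mul_le_mul_right (measure_mono hsub) _
        _ ≤ ∫⁻ x, ENNReal.ofReal (1 / (1 + |f x|) ^ k) ∂μ :=
            mul_meas_ge_le_lintegral₀ hmg ε
        _ ≤ B := h μ hμ
    have hε0 : ε ≠ 0 := by
      simp only [hε, ne_eq, ENNReal.ofReal_eq_zero, not_le]
      positivity
    have hεt : ε ≠ ∞ := ENNReal.ofReal_ne_top
    have hεinv : ε⁻¹ = ENNReal.ofReal ((1 + R) ^ k) := by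
      rw [hε, one_div, ENNReal.ofReal_inv_of_pos (by positivity), inv_inv]
    have hμle : μ {x | |f x| ≤ R} ≤ B * ENNReal.ofReal ((1 + R) ^ k) := by
      have := (ENNReal.le_div_iff_mul_le (Or.inl hε0) (Or.inl hεt)).mpr key
      rwa [ENNReal.div_eq_inv_mul, hεinv, mul_comm] at this
    refine hμle.trans ?_
    have hB1 : B ≤ ENNReal.ofReal (B.toReal + 1) := by
      conv_lhs => rw [← ENNReal.ofReal_toReal hB.ne]
      exact ENNReal.ofReal_le_ofReal (by linarith)
    have hpow : (1 + R) ^ k ≤ (1 + R) ^ ((k : ℝ) + 1) := by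
      rw [← Real.rpow_natCast (1 + R) k]
      exact Real.rpow_le_rpow_of_exponent_le (by linarith) (by linarith)
    calc B * ENNReal.ofReal ((1 + R) ^ k)
        ≤ ENNReal.ofReal (B.toReal + 1) * ENNReal.ofReal ((1 + R) ^ ((k : ℝ) + 1)) :=
          mul_le_mul' hB1 (ENNReal.ofReal_le_ofReal hpow)
      _ = ENNReal.ofReal ((B.toReal + 1) * (1 + R) ^ ((k : ℝ) + 1)) :=
          (ENNReal.ofReal_mul (by positivity)).symm
end
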